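/- arXiv:math/9911271 — 6 statements merged into one kernel-verified Lean document; each statement's English description precedes it below -/
import Mathlib

section
/- The G-sets X and Y are isomorphic as B-sets, i.e. there is a B-equivariant bijection X → Y. -/
open Matrix CategoryTheory CategoryTheory.Limits Pointwise
open scoped LinearAlgebra.Projectivization

noncomputable section

/-- The projective line over a field `K`, as the projectivization of `K²`. -/
abbrev P1 (K : Type*) [Field K] := ℙ K (Fin 2 → K)

namespace P1

variable {K : Type*} [Field K]

lemma mulVec_ne_zero (g : GL (Fin 2) K) {v : Fin 2 → K} (hv : v ≠ 0) :
    (g : Matrix (Fin 2) (Fin 2) K) *ᵥ v ≠ 0 := by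
  intro h
  apply hv
  have h2 := congrArg (fun w => ((g⁻¹ : GL (Fin 2) K) : Matrix (Fin 2) (Fin 2) K) *ᵥ w) h
  simp only [Matrix.mulVec_mulVec] at h2
  rw [Units.inv_mul, Matrix.one_mulVec, Matrix.mulVec_zero] at h2
  exact h2

/-- The natural action of `GL₂(K)` on the projective line `ℙ¹(K)`. -/
instance : SMul (GL (Fin 2) K) (P1 K) :=
  ⟨fun g x => Projectivization.mk K ((g : Matrix (Fin 2) (Fin 2) K) *ᵥ x.rep)
    (mulVec_ne_zero g x.rep_nonzero)⟩

lemma smul_mk (g : GL (Fin 2) K) (v : Fin 2 → K) (hv : v ≠ 0) :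
    g • Projectivization.mk K v hv
      = Projectivization.mk K ((g : Matrix (Fin 2) (Fin 2) K) *ᵥ v) (mulVec_ne_zero g hv) := by
  show Projectivization.mk K _ _ = _
  rw [Projectivization.mk_eq_mk_iff]
  obtain ⟨a, ha⟩ := Projectivization.exists_smul_eq_mk_rep K v hv
  exact ⟨a, by rw [← ha]; simp [Matrix.mulVec_smul]⟩

instance : MulAction (GL (Fin 2) K) (P1 K) where
  one_smul x := by
    induction x using Projectivization.ind with
    | h v hv => rw [smul_mk]; simp
  mul_smul g h x := by
    induction x using Projectivization.ind with
    | h v hv => rw [smul_mk, smul_mk, smul_mk]; simp only [Units.val_mul, Matrix.mulVec_mulVec]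

end P1

section Setup

variable (F : Type*) [Field F] (F' : Type*) [Field F'] [Algebra F F']

/-- The inclusion `GL₂(F) → GL₂(F')` induced by the inclusion `F ⊆ F'`. -/
def glMap : GL (Fin 2) F →* GL (Fin 2) F' :=
  Matrix.GeneralLinearGroup.map (algebraMap F F')

/-- The scalar matrices, as a homomorphism `Fˣ →* GL₂(F)`. -/
def scalarGL : Fˣ →* GL (Fin 2) F :=
  Units.map (Matrix.scalar (Fin 2)).toMonoidHom

variable {F F'}

/-- The (semilinear) action of a field automorphism `σ ∈ Gal(F'/F)` on `ℙ¹(F')`. -/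
def sigmaPt (σ : F' ≃ₐ[F] F') (x : P1 F') : P1 F' :=
  Projectivization.mk F' (fun i => σ (x.rep i))
    (fun h => x.rep_nonzero (funext fun i => σ.injective (by simpa using congrFun h i)))

variable (F F')

/-- The set of `F`-rational points `ℙ¹(F) ⊆ ℙ¹(F')`. -/
def ratPts : Set (P1 F') :=
  Set.range (fun x : P1 F =>
    Projectivization.mk F' (fun i => algebraMap F F' (x.rep i))
      (fun h => x.rep_nonzero (funext fun i =>
        (algebraMap F F').injective (by simpa using congrFun h i))))

/-- A Borel subgroup of `GL₂(F)`: the stabilizer of a point `∞ ∈ ℙ¹(F)`. -/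
def Bsub (xoo : P1 F) : Subgroup (GL (Fin 2) F) :=
  MulAction.stabilizer (GL (Fin 2) F) xoo

/-- A split maximal torus of `GL₂(F)`: the pointwise stabilizer of `{0, ∞} ⊆ ℙ¹(F)`. -/
def Tsub (x0 xoo : P1 F) : Subgroup (GL (Fin 2) F) :=
  MulAction.stabilizer (GL (Fin 2) F) x0 ⊓ MulAction.stabilizer (GL (Fin 2) F) xoo

/-- The setwise stabilizer of `{0, ∞} ⊆ ℙ¹(F)` in `GL₂(F)`. -/
def Nsub (x0 xoo : P1 F) : Subgroup (GL (Fin 2) F) :=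
  MulAction.stabilizer (GL (Fin 2) F) ({x0, xoo} : Set (P1 F))

/-- A nonsplit maximal torus of `GL₂(F)`: the stabilizer in `GL₂(F)` of a point
`P ∈ ℙ¹(F') ∖ ℙ¹(F)`. -/
def T'sub (P : P1 F') : Subgroup (GL (Fin 2) F) :=
  (MulAction.stabilizer (GL (Fin 2) F') P).comap (glMap F F')

/-- The setwise stabilizer in `GL₂(F)` of the pair `{P, σP}`, for `P ∈ ℙ¹(F') ∖ ℙ¹(F)`. -/
def N'sub (σ : F' ≃ₐ[F] F') (P : P1 F') : Subgroup (GL (Fin 2) F) :=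
  (MulAction.stabilizer (GL (Fin 2) F') ({P, sigmaPt σ P} : Set (P1 F'))).comap (glMap F F')

end Setup

section XY

variable (F : Type*) [Field F] (F' : Type*) [Field F'] [Algebra F F']

/-- The `G`-set `X = (ℙ¹(F) × ℙ¹(F) ∖ Δ) ⊔ {*₁} ⊔ {*₂}`. -/
def Xset := {p : P1 F × P1 F // p.1 ≠ p.2} ⊕ (Unit ⊕ Unit)

/-- The `G`-set `Y = ℙ¹(F') ⊔ ℙ¹(F)`. -/
def Yset := P1 F' ⊕ P1 F

variable {F F'}

/-- The action of `GL₂(F)` on `X` (diagonally on pairs, trivially on the two added points). -/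
def actX (g : GL (Fin 2) F) : Xset F → Xset F
  | Sum.inl p => Sum.inl ⟨(g • p.1.1, g • p.1.2), fun h => p.2 (MulAction.injective g h)⟩
  | Sum.inr u => Sum.inr u

/-- The action of `GL₂(F)` on `Y` (via `GL₂(F) ⊆ GL₂(F')` on `ℙ¹(F')`). -/
def actY (g : GL (Fin 2) F) : Yset F F' → Yset F F'
  | Sum.inl y => Sum.inl (glMap F F' g • y)
  | Sum.inr y => Sum.inr (g • y)

end XY

namespace Statement5Aux

open Projectivization

variable {K : Type*} [Field K]

/-- The affine point `x ∈ ℙ¹(K)`. -/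
def toP1 (x : K) : P1 K :=
  Projectivization.mk K ![x, 1] (by intro h; simp [funext_iff, Fin.forall_fin_two] at h)

/-- The point `∞ ∈ ℙ¹(K)`. -/
def infP1 : P1 K :=
  Projectivization.mk K ![1, 0] (by intro h; simp [funext_iff, Fin.forall_fin_two] at h)

/-- Affine coordinates for `ℙ¹(K)`: `none` is `∞`, `some x` is the affine point `x`. -/
def ofCoord : Option K → P1 K
  | none => infP1
  | some x => toP1 x

lemma toP1_injective : Function.Injective (toP1 (K := K)) := by
  intro x y h
  rw [toP1, toP1, Projectivization.mk_eq_mk_iff] at h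
  obtain ⟨a, ha⟩ := h
  have h1 := congrFun ha 1
  have h0 := congrFun ha 0
  simp [Units.smul_def] at h1 h0
  rw [← h0, h1]
  simp

lemma toP1_ne_inf (x : K) : toP1 x ≠ infP1 := by
  rw [toP1, infP1, Ne, Projectivization.mk_eq_mk_iff]
  rintro ⟨a, ha⟩
  have h1 := congrFun ha 1
  simp [Units.smul_def] at h1

lemma ofCoord_bijective : Function.Bijective (ofCoord (K := K)) := by
  constructor
  · intro o1 o2 h
    match o1, o2 with
    | none, none => rfl
    | none, some x => exact absurd h.symm (toP1_ne_inf x)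
    | some x, none => exact absurd h (toP1_ne_inf x)
    | some x, some y => exact congrArg some (toP1_injective h)
  · intro p
    induction p using Projectivization.ind with
    | h v hv =>
      by_cases h1 : v 1 = 0
      · refine ⟨none, ?_⟩
        have h0 : v 0 ≠ 0 := by
          intro h0
          exact hv (funext fun i => by fin_cases i <;> assumption)
        show infP1 = _
        rw [infP1, Projectivization.mk_eq_mk_iff']
        exact ⟨(v 0)⁻¹, funext fun i => by fin_cases i <;> simp [h1, h0, inv_mul_cancel₀]⟩
      · refine ⟨some (v 0 / v 1), ?_⟩
        show toP1 _ = _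
        rw [toP1, Projectivization.mk_eq_mk_iff']
        exact ⟨(v 1)⁻¹, funext fun i => by
          fin_cases i <;> simp [h1, inv_mul_cancel₀, inv_mul_eq_div]⟩

/-- The affine chart as an equivalence. -/
def chart : Option K ≃ P1 K := Equiv.ofBijective _ ofCoord_bijective

@[simp] lemma chart_apply (o : Option K) : chart o = ofCoord o := rfl

end Statement5Aux
namespace Statement5Aux

variable {K : Type*} [Field K]

lemma det_coe_ne_zero (g : GL (Fin 2) K) : ((g : Matrix (Fin 2) (Fin 2) K)).det ≠ 0 := by
  have : IsUnit ((g : Matrix (Fin 2) (Fin 2) K)).det :=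
    (Matrix.isUnit_iff_isUnit_det _).mp g.isUnit
  exact this.ne_zero

lemma d_ne_zero (g : GL (Fin 2) K) (hg : (g : Matrix (Fin 2) (Fin 2) K) 1 0 = 0) :
    (g : Matrix (Fin 2) (Fin 2) K) 1 1 ≠ 0 := by
  intro h
  apply det_coe_ne_zero g
  rw [Matrix.det_fin_two, hg, h]
  ring

lemma a_ne_zero (g : GL (Fin 2) K) (hg : (g : Matrix (Fin 2) (Fin 2) K) 1 0 = 0) :
    (g : Matrix (Fin 2) (Fin 2) K) 0 0 ≠ 0 := by
  intro h
  apply det_coe_ne_zero g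
  rw [Matrix.det_fin_two, hg, h]
  ring

/-- The coefficient `a/d` of the affine map induced by an upper triangular `g`. -/
def coA (g : GL (Fin 2) K) : K :=
  (g : Matrix (Fin 2) (Fin 2) K) 0 0 / (g : Matrix (Fin 2) (Fin 2) K) 1 1

/-- The coefficient `b/d` of the affine map induced by an upper triangular `g`. -/
def coB (g : GL (Fin 2) K) : K :=
  (g : Matrix (Fin 2) (Fin 2) K) 0 1 / (g : Matrix (Fin 2) (Fin 2) K) 1 1

lemma coA_ne_zero (g : GL (Fin 2) K) (hg : (g : Matrix (Fin 2) (Fin 2) K) 1 0 = 0) :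
    coA g ≠ 0 :=
  div_ne_zero (a_ne_zero g hg) (d_ne_zero g hg)

lemma smul_ofCoord (g : GL (Fin 2) K) (hg : (g : Matrix (Fin 2) (Fin 2) K) 1 0 = 0)
    (o : Option K) :
    g • ofCoord o = ofCoord (o.map (fun x => coA g * x + coB g)) := by
  set M := (g : Matrix (Fin 2) (Fin 2) K) with hM
  have hd := d_ne_zero g hg
  have ha := a_ne_zero g hg
  match o with
  | none =>
    show g • infP1 = infP1
    rw [infP1, P1.smul_mk, Projectivization.mk_eq_mk_iff']
    refine ⟨M 0 0, funext fun i => ?_⟩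
    fin_cases i <;> simp [Matrix.mulVec, dotProduct, Fin.sum_univ_two, ← hM, hg]
  | some x =>
    show g • toP1 x = toP1 (coA g * x + coB g)
    rw [toP1, P1.smul_mk, toP1, Projectivization.mk_eq_mk_iff']
    refine ⟨M 1 1, funext fun i => ?_⟩
    fin_cases i
    · simp [Matrix.mulVec, dotProduct, Fin.sum_univ_two, ← hM, hg, coA, coB]
      have hd' : M 1 1 ≠ 0 := hd
      field_simp
    · simp [Matrix.mulVec, dotProduct, Fin.sum_univ_two, ← hM, hg]

lemma glMap_entry {F : Type*} [Field F] {F' : Type*} [Field F'] [Algebra F F']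
    (g : GL (Fin 2) F) (i j : Fin 2) :
    ((glMap F F' g : GL (Fin 2) F') : Matrix (Fin 2) (Fin 2) F') i j
      = algebraMap F F' ((g : Matrix (Fin 2) (Fin 2) F) i j) :=
  Matrix.GeneralLinearGroup.map_apply _ _ _ _

end Statement5Aux
namespace Statement5Aux

variable (F : Type*) [Field F] (F' : Type*) [Field F'] [Algebra F F']

/-- Coordinate model of `X`. -/
abbrev Xc := {p : Option F × Option F // p.1 ≠ p.2} ⊕ (Unit ⊕ Unit)

/-- Coordinate model of `Y`. -/
abbrev Yc := Option F' ⊕ Option F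

variable {F F'}

lemma aff_injective {A B : F} (hA : A ≠ 0) : Function.Injective (fun x : F => A * x + B) :=
  fun x y h => mul_left_cancel₀ hA (add_right_cancel h)

/-- Coordinate action on `X`. -/
def actXc (A B : F) (hA : A ≠ 0) : Xc F → Xc F
  | Sum.inl p => Sum.inl ⟨(p.1.1.map (fun x => A * x + B), p.1.2.map (fun x => A * x + B)),
      fun h => p.2 (Option.map_injective (aff_injective hA) h)⟩
  | Sum.inr u => Sum.inr u

/-- Coordinate action on `Y`. -/
def actYc (A B : F) : Yc F F' → Yc F F'
  | Sum.inl z => Sum.inl (z.map (fun t => algebraMap F F' A * t + algebraMap F F' B))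
  | Sum.inr y => Sum.inr (y.map (fun x => A * x + B))

/-- The bijection `X → Y` in coordinates. -/
def Fc (θ : F') : Xc F → Yc F F'
  | Sum.inl ⟨(none, none), h⟩ => (h rfl).elim
  | Sum.inl ⟨(none, some y), _⟩ => Sum.inr (some y)
  | Sum.inl ⟨(some x, none), _⟩ => Sum.inl (some (algebraMap F F' x))
  | Sum.inl ⟨(some x, some y), _⟩ =>
      Sum.inl (some (algebraMap F F' x + algebraMap F F' (y - x) * θ))
  | Sum.inr (Sum.inl _) => Sum.inl none
  | Sum.inr (Sum.inr _) => Sum.inr none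

open Classical in
/-- The inverse bijection `Y → X` in coordinates. -/
def Gc (c0 c1 : F' → F) : Yc F F' → Xc F
  | Sum.inl none => Sum.inr (Sum.inl ())
  | Sum.inl (some z) =>
      if h : c1 z = 0 then
        Sum.inl ⟨(some (c0 z), none), by simp⟩
      else
        Sum.inl ⟨(some (c0 z), some (c0 z + c1 z)), by
          simp only [ne_eq, Option.some.injEq]
          intro hc
          exact h (by linear_combination -hc)⟩
  | Sum.inr none => Sum.inr (Sum.inr ())
  | Sum.inr (some y) => Sum.inl ⟨(none, some y), by simp⟩

variable {θ : F'} {c0 c1 : F' → F}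

lemma Gc_Fc (hS1 : ∀ x w : F, c0 (algebraMap F F' x + algebraMap F F' w * θ) = x)
    (hS2 : ∀ x w : F, c1 (algebraMap F F' x + algebraMap F F' w * θ) = w)
    (xc : Xc F) : Gc c0 c1 (Fc θ xc) = xc := by
  have hS1' : ∀ x : F, c0 (algebraMap F F' x) = x := by
    intro x; have := hS1 x 0; simpa using this
  have hS2' : ∀ x : F, c1 (algebraMap F F' x) = 0 := by
    intro x; have := hS2 x 0; simpa using this
  match xc with
  | Sum.inl ⟨(none, none), h⟩ => exact (h rfl).elim
  | Sum.inl ⟨(none, some y), h⟩ => rfl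
  | Sum.inl ⟨(some x, none), h⟩ =>
    show Gc c0 c1 (Sum.inl (some (algebraMap F F' x))) = _
    rw [Gc, dif_pos (hS2' x)]
    simp [hS1']
  | Sum.inl ⟨(some x, some y), h⟩ =>
    have hyx : y - x ≠ 0 := sub_ne_zero.mpr (fun hh => h (by rw [hh]))
    show Gc c0 c1 (Sum.inl (some (algebraMap F F' x + algebraMap F F' (y - x) * θ))) = _
    rw [Gc, dif_neg (by rw [hS2]; exact hyx)]
    refine congrArg Sum.inl (Subtype.ext (Prod.ext ?_ ?_))
    · dsimp only
      rw [hS1]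
    · dsimp only
      rw [hS1, hS2, add_sub_cancel]
  | Sum.inr (Sum.inl ()) => rfl
  | Sum.inr (Sum.inr ()) => rfl

lemma Fc_Gc (hS3 : ∀ z : F', z = algebraMap F F' (c0 z) + algebraMap F F' (c1 z) * θ)
    (yc : Yc F F') : Fc θ (Gc c0 c1 yc) = yc := by
  match yc with
  | Sum.inl none => rfl
  | Sum.inl (some z) =>
    by_cases h : c1 z = 0
    · show Fc θ (Gc c0 c1 (Sum.inl (some z))) = _
      rw [Gc, dif_pos h]
      show Sum.inl (some (algebraMap F F' (c0 z))) = Sum.inl (some z)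
      have := hS3 z
      rw [h] at this
      simp only [map_zero, zero_mul, add_zero] at this
      rw [← this]
    · show Fc θ (Gc c0 c1 (Sum.inl (some z))) = _
      rw [Gc, dif_neg h]
      show Sum.inl (some (algebraMap F F' (c0 z)
        + algebraMap F F' ((c0 z + c1 z) - c0 z) * θ)) = Sum.inl (some z)
      rw [add_sub_cancel_left, ← hS3 z]
  | Sum.inr none => rfl
  | Sum.inr (some y) => rfl

lemma Fc_equivariant (A B : F) (hA : A ≠ 0) (xc : Xc F) :
    Fc θ (actXc A B hA xc) = actYc A B (Fc θ xc) := by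
  match xc with
  | Sum.inl ⟨(none, none), h⟩ => exact (h rfl).elim
  | Sum.inl ⟨(none, some y), h⟩ => rfl
  | Sum.inl ⟨(some x, none), h⟩ =>
    show Sum.inl (some (algebraMap F F' (A * x + B))) = Sum.inl (some _)
    simp [_root_.map_add, _root_.map_mul]
  | Sum.inl ⟨(some x, some y), h⟩ =>
    show Sum.inl (some _) = Sum.inl (some _)
    congr 2
    simp only [_root_.map_add, _root_.map_mul, _root_.map_sub]
    ring
  | Sum.inr (Sum.inl ()) => rfl
  | Sum.inr (Sum.inr ()) => rfl

end Statement5Aux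
namespace Statement5Aux

variable {F : Type*} [Field F] {F' : Type*} [Field F'] [Algebra F F']

lemma exists_theta (hdim : Module.finrank F F' = 2) :
    ∃ θ : F', θ ∉ Set.range (algebraMap F F') := by
  by_contra hc
  push_neg at hc
  have hsurj : Function.Surjective (Algebra.linearMap F F') := by
    intro z
    obtain ⟨x, hx⟩ := hc z
    exact ⟨x, hx⟩
  have hinj : Function.Injective (Algebra.linearMap F F') := (algebraMap F F').injective
  have e := LinearEquiv.ofBijective (Algebra.linearMap F F') ⟨hinj, hsurj⟩
  have h2 := e.finrank_eq
  rw [Module.finrank_self, hdim] at h2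
  omega

lemma unique_decomp {θ : F'} (hθ : θ ∉ Set.range (algebraMap F F')) {x w x' w' : F}
    (h : algebraMap F F' x + algebraMap F F' w * θ
        = algebraMap F F' x' + algebraMap F F' w' * θ) :
    x = x' ∧ w = w' := by
  by_cases hw : w = w'
  · subst hw
    refine ⟨(algebraMap F F').injective ?_, rfl⟩
    exact add_right_cancel h
  · exfalso
    apply hθ
    refine ⟨(x - x') / (w' - w), ?_⟩
    have hww : algebraMap F F' (w' - w) ≠ 0 := by
      rw [Ne, map_eq_zero_iff _ (algebraMap F F').injective, sub_eq_zero]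
      exact fun hh => hw hh.symm
    rw [map_div₀]
    rw [div_eq_iff hww, _root_.map_sub, _root_.map_sub]
    linear_combination h

/-- The glue equivalence for `X`. -/
def eXc (F : Type*) [Field F] : Xc F ≃ Xset F :=
  Equiv.sumCongr
    (Equiv.subtypeEquiv (Equiv.prodCongr chart chart)
      (fun p => by
        simp only [Equiv.prodCongr_apply, Prod.map]
        exact (chart.injective.ne_iff).symm))
    (Equiv.refl _)

/-- The glue equivalence for `Y`. -/
def eYc (F : Type*) [Field F] (F' : Type*) [Field F'] [Algebra F F'] :
    Yc F F' ≃ Yset F F' :=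
  Equiv.sumCongr chart chart

lemma coA_glMap (g : GL (Fin 2) F) : coA (glMap F F' g) = algebraMap F F' (coA g) := by
  rw [coA, coA, glMap_entry, glMap_entry, map_div₀]

lemma coB_glMap (g : GL (Fin 2) F) : coB (glMap F F' g) = algebraMap F F' (coB g) := by
  rw [coB, coB, glMap_entry, glMap_entry, map_div₀]

lemma eXc_actXc (g : GL (Fin 2) F) (hg : (g : Matrix (Fin 2) (Fin 2) F) 1 0 = 0) (xc : Xc F) :
    eXc F (actXc (coA g) (coB g) (coA_ne_zero g hg) xc) = actX g (eXc F xc) := by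
  match xc with
  | Sum.inl ⟨(o1, o2), h⟩ =>
    show Sum.inl _ = Sum.inl _
    refine congrArg Sum.inl (Subtype.ext (Prod.ext ?_ ?_)) <;>
      exact (smul_ofCoord g hg _).symm
  | Sum.inr u => rfl

lemma eYc_actYc (g : GL (Fin 2) F) (hg : (g : Matrix (Fin 2) (Fin 2) F) 1 0 = 0)
    (yc : Yc F F') :
    eYc F F' (actYc (coA g) (coB g) yc) = actY g (eYc F F' yc) := by
  have hg' : ((glMap F F' g : GL (Fin 2) F') : Matrix (Fin 2) (Fin 2) F') 1 0 = 0 := by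
    rw [glMap_entry, hg, map_zero]
  match yc with
  | Sum.inl z =>
    show Sum.inl _ = Sum.inl (glMap F F' g • ofCoord z)
    refine congrArg Sum.inl ?_
    rw [smul_ofCoord (glMap F F' g) hg', coA_glMap, coB_glMap]
    exact chart_apply _
  | Sum.inr y =>
    show Sum.inr (ofCoord _) = Sum.inr (g • ofCoord y)
    exact congrArg Sum.inr (smul_ofCoord g hg _).symm

lemma entry_of_mem_B (g : GL (Fin 2) F) (h : g • (infP1 : P1 F) = infP1) :
    (g : Matrix (Fin 2) (Fin 2) F) 1 0 = 0 := by
  rw [infP1, P1.smul_mk, Projectivization.mk_eq_mk_iff'] at h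
  obtain ⟨a, ha⟩ := h
  have h1 := congrFun ha 1
  simpa [Matrix.mulVec, dotProduct, Fin.sum_univ_two] using h1.symm

lemma actX_mul (g h : GL (Fin 2) F) (x : Xset F) :
    actX (g * h) x = actX g (actX h x) := by
  match x with
  | Sum.inl p =>
    exact congrArg Sum.inl (Subtype.ext (Prod.ext (mul_smul g h p.1.1) (mul_smul g h p.1.2)))
  | Sum.inr u => rfl

lemma actX_one (x : Xset F) : actX (1 : GL (Fin 2) F) x = x := by
  match x with
  | Sum.inl p => exact congrArg Sum.inl (Subtype.ext (Prod.ext (one_smul _ _) (one_smul _ _)))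
  | Sum.inr u => rfl

lemma actY_mul (g h : GL (Fin 2) F) (y : Yset F F') :
    actY (g * h) y = actY g (actY h y) := by
  match y with
  | Sum.inl z =>
    show Sum.inl (glMap F F' (g * h) • z) = Sum.inl (glMap F F' g • (glMap F F' h • z))
    rw [_root_.map_mul, mul_smul]
  | Sum.inr w => exact congrArg Sum.inr (mul_smul g h w)

lemma actY_one (y : Yset F F') : actY (1 : GL (Fin 2) F) y = y := by
  match y with
  | Sum.inl z =>
    show Sum.inl (glMap F F' 1 • z) = Sum.inl z
    rw [_root_.map_one, one_smul]
  | Sum.inr w => exact congrArg Sum.inr (one_smul _ _)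

/-- `actX` as an equivalence. -/
def equivX (g : GL (Fin 2) F) : Xset F ≃ Xset F where
  toFun := actX g
  invFun := actX g⁻¹
  left_inv x := by rw [← actX_mul, inv_mul_cancel, actX_one]
  right_inv x := by rw [← actX_mul, mul_inv_cancel, actX_one]

/-- `actY` as an equivalence. -/
def equivY (g : GL (Fin 2) F) : Yset F F' ≃ Yset F F' where
  toFun := actY g
  invFun := actY g⁻¹
  left_inv y := by rw [← actY_mul, inv_mul_cancel, actY_one]
  right_inv y := by rw [← actY_mul, mul_inv_cancel, actY_one]

lemma exists_g0 (p : P1 F) : ∃ g : GL (Fin 2) F, g • (infP1 : P1 F) = p := by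
  induction p using Projectivization.ind with
  | h v hv =>
    by_cases h0 : v 0 = 0
    · have h1 : v 1 ≠ 0 := by
        intro h1
        exact hv (funext fun i => by fin_cases i <;> assumption)
      refine ⟨Matrix.GeneralLinearGroup.mkOfDetNeZero ![![v 0, 1], ![v 1, 0]]
        (ne_of_eq_of_ne (Matrix.det_fin_two_of (v 0) 1 (v 1) 0) (by simp [h0, h1])), ?_⟩
      rw [infP1, P1.smul_mk, Projectivization.mk_eq_mk_iff']
      refine ⟨1, funext fun i => ?_⟩
      fin_cases i <;>
        simp [Matrix.GeneralLinearGroup.mkOfDetNeZero, Matrix.GeneralLinearGroup.mk',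
          Matrix.unitOfDetInvertible, unitOfInvertible,
          Matrix.mulVec, dotProduct, Fin.sum_univ_two]
    · refine ⟨Matrix.GeneralLinearGroup.mkOfDetNeZero ![![v 0, 0], ![v 1, 1]]
        (ne_of_eq_of_ne (Matrix.det_fin_two_of (v 0) 0 (v 1) 1) (by simp [h0])), ?_⟩
      rw [infP1, P1.smul_mk, Projectivization.mk_eq_mk_iff']
      refine ⟨1, funext fun i => ?_⟩
      fin_cases i <;>
        simp [Matrix.GeneralLinearGroup.mkOfDetNeZero, Matrix.GeneralLinearGroup.mk',
          Matrix.unitOfDetInvertible, unitOfInvertible,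
          Matrix.mulVec, dotProduct, Fin.sum_univ_two]

end Statement5Aux
open Statement5Aux in
/-- The `G`-sets `X = (ℙ¹(F) × ℙ¹(F) ∖ Δ) ⊔ {*₁} ⊔ {*₂}` and
`Y = ℙ¹(F') ⊔ ℙ¹(F)` are isomorphic as `B`-sets. -/
theorem statement5 {F : Type*} [Field F] [Fintype F] {F' : Type*} [Field F'] [Algebra F F']
    (hdim : Module.finrank F F' = 2)
    (xoo : P1 F) :
    ∃ f : Xset F ≃ Yset F F', ∀ b ∈ Bsub F xoo, ∀ x, f (actX b x) = actY b (f x) := by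
  classical
  obtain ⟨θ, hθ⟩ := exists_theta hdim
  have li : LinearIndependent F ![(1 : F'), θ] := by
    refine LinearIndependent.pair_iff.mpr fun s t hst => ?_
    rw [Algebra.smul_def, mul_one, Algebra.smul_def] at hst
    by_cases ht : t = 0
    · subst ht
      simp only [map_zero, zero_mul, add_zero] at hst
      exact ⟨(map_eq_zero_iff _ (algebraMap F F').injective).mp hst, rfl⟩
    · exfalso
      apply hθ
      refine ⟨-s / t, ?_⟩
      have htt : algebraMap F F' t ≠ 0 := by
        rw [Ne, map_eq_zero_iff _ (algebraMap F F').injective]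
        exact ht
      rw [map_div₀, map_neg, div_eq_iff htt]
      linear_combination -hst
  have hcard : Fintype.card (Fin 2) = Module.finrank F F' := by simp [hdim]
  let bb := basisOfLinearIndependentOfCardEqFinrank li hcard
  have hbb : ⇑bb = ![(1 : F'), θ] := coe_basisOfLinearIndependentOfCardEqFinrank li hcard
  set c0 : F' → F := fun z => bb.repr z 0 with hc0
  set c1 : F' → F := fun z => bb.repr z 1 with hc1
  have hS3 : ∀ z : F', z = algebraMap F F' (c0 z) + algebraMap F F' (c1 z) * θ := by
    intro z
    conv_lhs => rw [← bb.sum_repr z]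
    rw [Fin.sum_univ_two]
    have hb0 : bb 0 = 1 := by rw [hbb]; rfl
    have hb1 : bb 1 = θ := by rw [hbb]; rfl
    rw [hb0, hb1, Algebra.smul_def, Algebra.smul_def, mul_one]
  have hS1 : ∀ x w : F, c0 (algebraMap F F' x + algebraMap F F' w * θ) = x := fun x w =>
    (unique_decomp hθ (hS3 (algebraMap F F' x + algebraMap F F' w * θ)).symm).1
  have hS2 : ∀ x w : F, c1 (algebraMap F F' x + algebraMap F F' w * θ) = w := fun x w =>
    (unique_decomp hθ (hS3 (algebraMap F F' x + algebraMap F F' w * θ)).symm).2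
  obtain ⟨g0, hg0⟩ := exists_g0 xoo
  let fc : Xc F ≃ Yc F F' := ⟨Fc θ, Gc c0 c1, Gc_Fc hS1 hS2, Fc_Gc hS3⟩
  refine ⟨(equivX g0⁻¹).trans (((eXc F).symm.trans (fc.trans (eYc F F'))).trans (equivY g0)),
    ?_⟩
  intro b hb x
  have hbx : b • xoo = xoo := MulAction.mem_stabilizer_iff.mp hb
  set g' := g0⁻¹ * b * g0 with hg'def
  have hb' : g' • (infP1 : P1 F) = infP1 := by
    rw [hg'def, mul_smul, mul_smul, hg0, hbx, ← hg0, inv_smul_smul]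
  have hent : (g' : Matrix (Fin 2) (Fin 2) F) 1 0 = 0 := entry_of_mem_B g' hb'
  have hkey : ∀ y : Xset F,
      (eYc F F') (Fc θ ((eXc F).symm (actX g' y)))
        = actY g' ((eYc F F') (Fc θ ((eXc F).symm y))) := by
    intro y
    conv_lhs => rw [← Equiv.apply_symm_apply (eXc F) y]
    rw [← eXc_actXc g' hent, Equiv.symm_apply_apply,
      Fc_equivariant (coA g') (coB g') (coA_ne_zero g' hent), eYc_actYc g' hent]
  show actY g0 ((eYc F F') (Fc θ ((eXc F).symm (actX g0⁻¹ (actX b x)))))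
      = actY b (actY g0 ((eYc F F') (Fc θ ((eXc F).symm (actX g0⁻¹ x)))))
  have h1 : actX g0⁻¹ (actX b x) = actX g' (actX g0⁻¹ x) := by
    rw [← actX_mul, ← actX_mul, hg'def]
    congr 1
    group
  rw [h1, hkey, ← actY_mul, ← actY_mul]
  congr 1
  rw [hg'def]
  group
end
end

section
/- The group T' is isomorphic to the multiplicative group F'^* of the quadratic extension F'; in particular T' is cyclic of order q² − 1. An isomorphism is given by letting T' act on the F'-line in F'² corresponding to the fixed point P. -/
/-! Write `P = [z : 1]`. Since `P` is not rational, `z ∉ F`, so `(z, 1)` is an `F`-basis `b`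
of `F'`. An element `g ∈ GL₂(F)` fixes `P` exactly when `g (z, 1)ᵀ = x (z, 1)ᵀ` for some
`x ∈ F'ˣ`, and read in the basis `b` this equation says that `g` is the transpose of the matrix
of multiplication by `x`. Hence `x ↦ (leftMulMatrix b x)ᵀ` is an isomorphism `F'ˣ ≃* T'`, and
`F'ˣ` is cyclic of order `q² - 1`. -/

open Matrix CategoryTheory CategoryTheory.Limits Pointwise
open scoped LinearAlgebra.Projectivization

noncomputable section

open Module

section LeftMulMatrix

variable {F F' : Type*} [Field F] [Field F'] [Algebra F F']
  {ι : Type*} [Fintype ι] [DecidableEq ι]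

lemma map_mulVec_basis_eq_smul_iff (b : Basis ι F F') (M : Matrix ι ι F) (x : F') :
    M.map (algebraMap F F') *ᵥ ⇑b = x • ⇑b ↔ M = (Algebra.leftMulMatrix b x)ᵀ := by
  have hrow : ∀ i, (M.map (algebraMap F F') *ᵥ ⇑b) i = b.equivFun.symm (M i) := fun i => by
    simp [Matrix.mulVec, dotProduct, Basis.equivFun_symm_apply, Algebra.smul_def]
  rw [← Matrix.ext_iff]
  simp only [funext_iff, hrow, Pi.smul_apply, smul_eq_mul, LinearEquiv.symm_apply_eq]
  simp [Algebra.leftMulMatrix_apply, LinearMap.toMatrix_apply]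

/-- Transposition reverses products, which is harmless because `F'` is commutative. -/
def transposeLeftMulGL (b : Basis ι F F') : F'ˣ →* GL ι F where
  toFun x := ⟨(Algebra.leftMulMatrix b x)ᵀ, (Algebra.leftMulMatrix b ↑x⁻¹)ᵀ,
    by rw [← Matrix.transpose_mul, ← map_mul, Units.inv_mul, map_one, Matrix.transpose_one],
    by rw [← Matrix.transpose_mul, ← map_mul, Units.mul_inv, map_one, Matrix.transpose_one]⟩
  map_one' := by ext1; simp
  map_mul' x y := by ext1; simp [mul_comm (x : F')]

@[simp]
lemma val_transposeLeftMulGL (b : Basis ι F F') (x : F'ˣ) :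
    (transposeLeftMulGL b x : Matrix ι ι F) = (Algebra.leftMulMatrix b x)ᵀ :=
  rfl

lemma transposeLeftMulGL_injective (b : Basis ι F F') :
    Function.Injective (transposeLeftMulGL b) := fun x y h =>
  Units.ext <| Algebra.leftMulMatrix_injective b <| Matrix.transpose_injective <| by
    simpa using congrArg Units.val h

end LeftMulMatrix

section Torus

variable {F F' : Type*} [Field F] [Field F'] [Algebra F F']

lemma mem_T'sub_mk_iff {w : Fin 2 → F'} (hw : w ≠ 0) (g : GL (Fin 2) F) :
    g ∈ T'sub F F' (Projectivization.mk F' w hw) ↔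
      ∃ x : F'ˣ, (g : Matrix (Fin 2) (Fin 2) F).map (algebraMap F F') *ᵥ w = (x : F') • w := by
  rw [T'sub, Subgroup.mem_comap, MulAction.mem_stabilizer_iff, P1.smul_mk,
    Projectivization.mk_eq_mk_iff]
  exact exists_congr fun x => eq_comm

lemma T'sub_mk_basis_eq_range (b : Basis (Fin 2) F F') (hb : ⇑b ≠ 0) :
    T'sub F F' (Projectivization.mk F' ⇑b hb) = (transposeLeftMulGL b).range := by
  ext g
  rw [mem_T'sub_mk_iff]
  simp only [map_mulVec_basis_eq_smul_iff, MonoidHom.mem_range]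
  exact exists_congr fun x => ⟨fun h => Units.ext h.symm, fun h => (congrArg Units.val h).symm⟩

end Torus

section RationalPoints

variable {F F' : Type*} [Field F] [Field F'] [Algebra F F']

lemma mk_mem_ratPts_of_eq_smul {v : Fin 2 → F'} (hv : v ≠ 0) (u : Fin 2 → F) (c : F')
    (h : v = c • fun i => algebraMap F F' (u i)) :
    Projectivization.mk F' v hv ∈ ratPts F F' := by
  have hu : u ≠ 0 := by
    rintro rfl
    exact hv (by rw [h]; ext; simp)
  refine ⟨Projectivization.mk F u hu, ?_⟩
  obtain ⟨a, ha⟩ := Projectivization.exists_smul_eq_mk_rep F u hu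
  rw [eq_comm, Projectivization.mk_eq_mk_iff']
  refine ⟨c * algebraMap F F' ↑a⁻¹, funext fun i => ?_⟩
  simp [h, ← ha, Units.smul_def, ← mul_assoc]

lemma exists_eq_mk_of_notMem_ratPts {P : P1 F'} (hP : P ∉ ratPts F F') :
    ∃ (z : F') (hz : ![z, 1] ≠ 0), z ∉ Set.range (algebraMap F F') ∧
      P = Projectivization.mk F' ![z, 1] hz := by
  induction P using Projectivization.ind with
  | h v hv =>
  have hv1 : v 1 ≠ 0 := fun hv1 => hP <| mk_mem_ratPts_of_eq_smul hv ![1, 0] (v 0) <| by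
    ext i; fin_cases i <;> simp [hv1]
  refine ⟨v 0 / v 1, by simp, ?_, ?_⟩
  · rintro ⟨t, ht⟩
    refine hP <| mk_mem_ratPts_of_eq_smul hv ![t, 1] (v 1) ?_
    ext i; fin_cases i <;> simp [ht, mul_div_cancel₀ _ hv1]
  · rw [Projectivization.mk_eq_mk_iff']
    exact ⟨v 1, by ext i; fin_cases i <;> simp [mul_div_cancel₀ _ hv1]⟩

lemma exists_basis_coe_eq_of_notMem_range (hdim : finrank F F' = 2) {z : F'}
    (hz : z ∉ Set.range (algebraMap F F')) : ∃ b : Basis (Fin 2) F F', ⇑b = ![z, 1] := by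
  have hli : LinearIndependent F ![z, 1] := linearIndependent_fin2.2
    ⟨one_ne_zero, fun a ha => hz ⟨a, by simpa [Algebra.smul_def] using ha⟩⟩
  exact ⟨basisOfLinearIndependentOfCardEqFinrank hli (by simp [hdim]),
    coe_basisOfLinearIndependentOfCardEqFinrank hli _⟩

end RationalPoints

/-- The group `T'` is isomorphic to `F'ˣ`; in particular it is cyclic of
order `q² − 1`. -/
theorem statement12 {F : Type*} [Field F] [Fintype F] {F' : Type*} [Field F'] [Algebra F F']
    (hdim : Module.finrank F F' = 2)
    (P : P1 F') (hP : P ∉ ratPts F F') :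
    Nonempty (↥(T'sub F F' P) ≃* F'ˣ) ∧ IsCyclic ↥(T'sub F F' P) ∧
      Nat.card ↥(T'sub F F' P) = Fintype.card F ^ 2 - 1 := by
  obtain ⟨z, hz0, hz, rfl⟩ := exists_eq_mk_of_notMem_ratPts hP
  obtain ⟨b, hb⟩ := exists_basis_coe_eq_of_notMem_range hdim hz
  have hrange :
      (transposeLeftMulGL b).range = T'sub F F' (Projectivization.mk F' ![z, 1] hz0) := by
    rw [← T'sub_mk_basis_eq_range b (hb ▸ hz0)]
    simp only [hb]
  let e := (MonoidHom.ofInjective (transposeLeftMulGL_injective b)).trans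
    (MulEquiv.subgroupCongr hrange)
  have : Module.Finite F F' := Module.finite_of_finrank_pos (by omega)
  have : Finite F' := Module.finite_of_finite F
  have : Fintype F' := Fintype.ofFinite F'
  refine ⟨⟨e.symm⟩, isCyclic_of_surjective e e.surjective, ?_⟩
  rw [← Nat.card_congr e.toEquiv, Nat.card_units, Nat.card_eq_fintype_card,
    Module.card_eq_pow_finrank (K := F), hdim]
end
end

section
/- N' is the normalizer of T' in G, and if F ≠ F₂ then N is the normalizer of T in G. -/
open Matrix CategoryTheory CategoryTheory.Limits Pointwise
open scoped LinearAlgebra.Projectivization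

noncomputable section

/-! Both tori are pointwise stabilizers of a pair of points `{p, q}` of a projective line; for
`T'` this is because `GL₂(F)` commutes with `σ`, so fixing `P` forces fixing `σ P`. The setwise
stabilizer of `{p, q}` always normalizes the pointwise one. Conversely, if some `t` in the torus
fixes no point besides `p` and `q`, then for `g` in the normalizer `g⁻¹ t g` fixes `p` and `q`, so
`t` fixes `g p` and `g q`, which therefore lie in `{p, q}`. In the split case `t = diag(1, b)` in
a basis of eigenvectors, with `b ∉ {0, 1}`, which is where `F ≠ 𝔽₂` is needed. In the nonsplit
case, with `P = [1 : z]`, `t` is the companion matrix of the minimal polynomial of `z`, whose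
eigenvalues `z` and `σ z` are distinct because `σ ≠ 1`. -/

namespace MulAction

variable {G H X : Type*} [Group G] [Group H] [MulAction H X]

lemma mem_stabilizer_pair_of_smul_mem {h : H} {p q : X}
    (hp : h • p ∈ ({p, q} : Set X)) (hq : h • q ∈ ({p, q} : Set X)) :
    h ∈ stabilizer H ({p, q} : Set X) := by
  rw [mem_stabilizer_set' (Set.toFinite _)]
  rintro x (rfl | rfl) <;> assumption

lemma conj_mem_inf_stabilizer {k h : H} {p q : X} (hk : k ∈ stabilizer H ({p, q} : Set X))
    (hh : h ∈ stabilizer H p ⊓ stabilizer H q) :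
    k * h * k⁻¹ ∈ stabilizer H p ⊓ stabilizer H q := by
  have hfix : ∀ x ∈ ({p, q} : Set X), h • x = x := by
    rintro x (rfl | rfl)
    exacts [hh.1, hh.2]
  have hk' : ∀ x ∈ ({p, q} : Set X), k⁻¹ • x ∈ ({p, q} : Set X) :=
    (mem_stabilizer_set' (Set.toFinite _)).mp (inv_mem hk)
  refine Subgroup.mem_inf.mpr ⟨?_, ?_⟩ <;>
  · rw [mem_stabilizer_iff, mul_smul, mul_smul, hfix _ (hk' _ (by simp)), smul_inv_smul]

theorem normalizer_comap_inf_stabilizer (φ : G →* H) {p q : X} {t : G}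
    (ht : t ∈ (stabilizer H p ⊓ stabilizer H q).comap φ)
    (hfix : ∀ x, φ t • x = x → x = p ∨ x = q) :
    Subgroup.normalizer ((stabilizer H p ⊓ stabilizer H q).comap φ : Set G) =
      (stabilizer H ({p, q} : Set X)).comap φ := by
  apply le_antisymm
  · intro g hg
    have hconj : φ (g⁻¹ * t * g) ∈ stabilizer H p ⊓ stabilizer H q :=
      (Subgroup.mem_normalizer_iff''.mp hg t).mp ht
    have hmaps : ∀ x, φ (g⁻¹ * t * g) • x = x → φ g • x ∈ ({p, q} : Set X) := fun x hx =>
      hfix _ (by rwa [map_mul, map_mul, map_inv, mul_smul, mul_smul, inv_smul_eq_iff] at hx)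
    exact mem_stabilizer_pair_of_smul_mem (hmaps p hconj.1) (hmaps q hconj.2)
  · intro g hg
    refine Subgroup.mem_normalizer_iff.mpr fun h => ⟨fun hh => ?_, fun hh => ?_⟩
    · simpa using conj_mem_inf_stabilizer hg hh
    · simpa [mul_assoc] using conj_mem_inf_stabilizer (inv_mem hg) hh

end MulAction

section LinearAlgebra

open Projectivization

variable {K : Type*} [Field K]

lemma exists_smul_add_smul_eq_of_finrank_eq_two {V : Type*} [AddCommGroup V] [Module K V]
    (hV : Module.finrank K V = 2) {v w : V} (hvw : LinearIndependent K ![v, w]) (u : V) :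
    ∃ α β : K, α • v + β • w = u := by
  have hspan := hvw.span_eq_top_of_card_eq_finrank (by simp [hV])
  rw [Matrix.range_cons_cons_empty] at hspan
  exact Submodule.mem_span_pair.mp (hspan ▸ Submodule.mem_top)

lemma exists_GL_mulVec_eq_smul {v w : Fin 2 → K} (hvw : LinearIndependent K ![v, w])
    (a b : Kˣ) : ∃ g : GL (Fin 2) K,
      (g : Matrix (Fin 2) (Fin 2) K) *ᵥ v = (a : K) • v ∧
      (g : Matrix (Fin 2) (Fin 2) K) *ᵥ w = (b : K) • w := by
  let B := basisOfLinearIndependentOfCardEqFinrank hvw (by simp)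
  let e := B.equiv (B.unitsSMul ![a, b]) (Equiv.refl _)
  have he : ∀ i, e (B i) = (![a, b] i : K) • B i := fun i => by
    simp [e, Module.Basis.equiv_apply, Module.Basis.unitsSMul_apply, Units.smul_def]
  refine ⟨.mkOfDetNeZero (LinearMap.toMatrix' e) ?_, ?_, ?_⟩
  · rw [LinearMap.det_toMatrix']
    exact e.isUnit_det'.ne_zero
  · simpa [B, LinearMap.toMatrix'_mulVec] using he 0
  · simpa [B, LinearMap.toMatrix'_mulVec] using he 1

lemma P1.vec_one_ne_zero (z : K) : (![1, z] : Fin 2 → K) ≠ 0 :=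
  fun h => one_ne_zero (congrFun h 0)

lemma P1.smul_mk_eq_self_iff (g : GL (Fin 2) K) {v : Fin 2 → K} (hv : v ≠ 0) :
    g • mk K v hv = mk K v hv ↔ ∃ c : K, (g : Matrix (Fin 2) (Fin 2) K) *ᵥ v = c • v := by
  rw [P1.smul_mk, mk_eq_mk_iff']
  exact exists_congr fun c => eq_comm

lemma P1.eq_or_eq_of_smul_eq_self {g : GL (Fin 2) K} {v w : Fin 2 → K} (hv : v ≠ 0)
    (hw : w ≠ 0) (hvw : LinearIndependent K ![v, w]) {a b : K} (hab : a ≠ b)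
    (hgv : (g : Matrix (Fin 2) (Fin 2) K) *ᵥ v = a • v)
    (hgw : (g : Matrix (Fin 2) (Fin 2) K) *ᵥ w = b • w) {x : P1 K} (hx : g • x = x) :
    x = mk K v hv ∨ x = mk K w hw := by
  induction x using Projectivization.ind with
  | h u hu =>
    obtain ⟨c, hc⟩ := (P1.smul_mk_eq_self_iff g hu).mp hx
    obtain ⟨α, β, rfl⟩ := exists_smul_add_smul_eq_of_finrank_eq_two (by simp) hvw u
    have hcoef : a * α = c * α ∧ b * β = c * β := by
      refine hvw.eq_of_pair ?_
      rw [← smul_smul, ← smul_smul, ← smul_smul, ← smul_smul, ← smul_add, ← hc,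
        Matrix.mulVec_add, Matrix.mulVec_smul, Matrix.mulVec_smul, hgv, hgw, smul_comm α,
        smul_comm β]
    by_cases hα : α = 0
    · subst hα
      right
      exact (mk_eq_mk_iff' K _ _ hu hw).mpr ⟨β, by simp⟩
    by_cases hβ : β = 0
    · subst hβ
      left
      exact (mk_eq_mk_iff' K _ _ hu hv).mpr ⟨α, by simp⟩
    exact (hab ((mul_right_cancel₀ hα hcoef.1).trans (mul_right_cancel₀ hβ hcoef.2).symm)).elim

lemma Matrix.companion_mulVec_eq_smul {R : Type*} [CommRing R] {c d z : R}
    (hz : z * z = c + d * z) : !![0, 1; c, d] *ᵥ ![1, z] = z • ![1, z] := by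
  ext i
  fin_cases i <;> simp [hz, mul_comm]

end LinearAlgebra

section QuadraticExtension

variable {F F' : Type*} [Field F] [Field F'] [Algebra F F']

lemma linearIndependent_one_of_notMem_range {z : F'} (hz : z ∉ Set.range (algebraMap F F')) :
    LinearIndependent F ![1, z] :=
  (LinearIndependent.pair_iff' one_ne_zero).mpr fun a ha =>
    hz ⟨a, by rw [← ha, Algebra.smul_def, mul_one]⟩

lemma exists_mul_self_eq_of_finrank_eq_two (hdim : Module.finrank F F' = 2) {z : F'}
    (hz : z ∉ Set.range (algebraMap F F')) :
    ∃ c d : F, z * z = algebraMap F F' c + algebraMap F F' d * z ∧ c ≠ 0 := by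
  obtain ⟨c, d, hcd⟩ := exists_smul_add_smul_eq_of_finrank_eq_two hdim
    (linearIndependent_one_of_notMem_range hz) (z * z)
  rw [Algebra.smul_def, Algebra.smul_def, mul_one] at hcd
  refine ⟨c, d, hcd.symm, ?_⟩
  rintro rfl
  have hz0 : z ≠ 0 := fun h => hz ⟨0, by rw [h, map_zero]⟩
  rw [map_zero, zero_add] at hcd
  exact hz ⟨d, mul_right_cancel₀ hz0 hcd⟩

lemma AlgEquiv.eq_refl_of_apply_eq_self (hdim : Module.finrank F F' = 2) {z : F'}
    (hz : z ∉ Set.range (algebraMap F F')) (σ : F' ≃ₐ[F] F') (hσz : σ z = z) :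
    σ = AlgEquiv.refl := by
  ext y
  obtain ⟨α, β, rfl⟩ := exists_smul_add_smul_eq_of_finrank_eq_two hdim
    (linearIndependent_one_of_notMem_range hz) y
  simp [hσz]

end QuadraticExtension

section RationalPoints

open Projectivization

variable {F F' : Type*} [Field F] [Field F'] [Algebra F F']

lemma sigmaPt_mk (σ : F' ≃ₐ[F] F') {u : Fin 2 → F'} (hu : u ≠ 0) :
    sigmaPt σ (mk F' u hu) = mk F' (fun i => σ (u i))
      (fun h => hu (funext fun i => σ.injective (by simpa using congrFun h i))) := by
  rw [sigmaPt, mk_eq_mk_iff']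
  obtain ⟨a, ha⟩ := exists_smul_eq_mk_rep F' u hu
  exact ⟨σ a, funext fun i => by simp [← ha, Units.smul_def]⟩

lemma sigmaPt_mk_one (σ : F' ≃ₐ[F] F') (z : F') :
    sigmaPt σ (mk F' ![1, z] (P1.vec_one_ne_zero z)) =
      mk F' ![1, σ z] (P1.vec_one_ne_zero _) := by
  rw [sigmaPt_mk]
  congr 1
  ext i
  fin_cases i <;> simp

lemma sigmaPt_glMap_smul (σ : F' ≃ₐ[F] F') (g : GL (Fin 2) F) (x : P1 F') :
    sigmaPt σ (glMap F F' g • x) = glMap F F' g • sigmaPt σ x := by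
  induction x using Projectivization.ind with
  | h u hu =>
    rw [P1.smul_mk, sigmaPt_mk, sigmaPt_mk, P1.smul_mk]
    congr 1
    ext i
    simp [Matrix.mulVec, dotProduct, glMap]

lemma mk_algebraMap_mem_ratPts {w : Fin 2 → F} (hw : w ≠ 0) :
    mk F' (fun i => algebraMap F F' (w i))
      (fun h => hw (funext fun i => (algebraMap F F').injective (by simpa using congrFun h i)))
      ∈ ratPts F F' := by
  refine ⟨mk F w hw, (mk_eq_mk_iff' _ _ _ _ _).mpr ?_⟩
  obtain ⟨a, ha⟩ := exists_smul_eq_mk_rep F w hw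
  exact ⟨algebraMap F F' a, funext fun i => by simp [← ha, Units.smul_def]⟩

lemma exists_eq_mk_one_of_notMem_ratPts {P : P1 F'} (hP : P ∉ ratPts F F') :
    ∃ z : F', z ∉ Set.range (algebraMap F F') ∧ P = mk F' ![1, z] (P1.vec_one_ne_zero z) := by
  induction P using Projectivization.ind with
  | h u hu =>
    by_cases h0 : u 0 = 0
    · refine absurd ?_ hP
      have hvert : (![0, 1] : Fin 2 → F) ≠ 0 := fun h => one_ne_zero (congrFun h 1)
      convert mk_algebraMap_mem_ratPts (F' := F') hvert using 1
      exact (mk_eq_mk_iff' _ _ _ _ _).mpr ⟨u 1, funext fun i => by fin_cases i <;> simp [h0]⟩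
    have hP' : mk F' u hu = mk F' ![1, u 1 / u 0] (P1.vec_one_ne_zero _) :=
      (mk_eq_mk_iff' _ _ _ _ _).mpr
        ⟨u 0, funext fun i => by fin_cases i <;> simp [mul_div_cancel₀ _ h0]⟩
    refine ⟨u 1 / u 0, fun ⟨r, hr⟩ => hP ?_, hP'⟩
    rw [hP']
    convert mk_algebraMap_mem_ratPts (F' := F') (P1.vec_one_ne_zero r) using 2
    ext i
    fin_cases i <;> simp [hr]

end RationalPoints

section Tori

open Projectivization MulAction

variable {F F' : Type*} [Field F] [Field F'] [Algebra F F']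

lemma T'sub_eq_comap_inf_stabilizer (σ : F' ≃ₐ[F] F') (P : P1 F') :
    T'sub F F' P =
      (stabilizer (GL (Fin 2) F') P ⊓ stabilizer (GL (Fin 2) F') (sigmaPt σ P)).comap
        (glMap F F') := by
  ext g
  simp only [T'sub, Subgroup.mem_comap, Subgroup.mem_inf, mem_stabilizer_iff]
  exact ⟨fun h => ⟨h, by rw [← sigmaPt_glMap_smul, h]⟩, And.left⟩

lemma exists_mem_comap_inf_stabilizer_of_notMem_ratPts (hdim : Module.finrank F F' = 2)
    {σ : F' ≃ₐ[F] F'} (hσ : σ ≠ AlgEquiv.refl) {P : P1 F'} (hP : P ∉ ratPts F F') :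
    ∃ t ∈ (stabilizer (GL (Fin 2) F') P ⊓ stabilizer (GL (Fin 2) F') (sigmaPt σ P)).comap
        (glMap F F'), ∀ x, glMap F F' t • x = x → x = P ∨ x = sigmaPt σ P := by
  obtain ⟨z, hz, rfl⟩ := exists_eq_mk_one_of_notMem_ratPts hP
  obtain ⟨c, d, hcd, hc⟩ := exists_mul_self_eq_of_finrank_eq_two hdim hz
  have hσz : σ z ≠ z := fun h => hσ (AlgEquiv.eq_refl_of_apply_eq_self hdim hz σ h)
  have hσcd : σ z * σ z = algebraMap F F' c + algebraMap F F' d * σ z := by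
    simpa using congrArg σ hcd
  let t := Matrix.GeneralLinearGroup.mkOfDetNeZero !![0, 1; c, d]
    (by simpa [Matrix.det_fin_two_of] using hc)
  have ht : (glMap F F' t : Matrix (Fin 2) (Fin 2) F') =
      !![0, 1; algebraMap F F' c, algebraMap F F' d] := by
    ext i j
    fin_cases i <;> fin_cases j <;> simp [t, glMap]
  have hv := Matrix.companion_mulVec_eq_smul hcd
  have hw := Matrix.companion_mulVec_eq_smul hσcd
  rw [← ht] at hv hw
  have hli : LinearIndependent F' ![![1, z], ![1, σ z]] :=
    (LinearIndependent.pair_iff' (P1.vec_one_ne_zero z)).mpr fun a ha => by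
      have ha1 : a = 1 := by simpa using congrFun ha 0
      exact hσz (by simpa [ha1] using (congrFun ha 1).symm)
  rw [sigmaPt_mk_one]
  exact ⟨t, ⟨(P1.smul_mk_eq_self_iff _ _).mpr ⟨z, hv⟩,
    (P1.smul_mk_eq_self_iff _ _).mpr ⟨σ z, hw⟩⟩,
    fun x hx => P1.eq_or_eq_of_smul_eq_self _ _ hli hσz.symm hv hw hx⟩

lemma exists_mem_inf_stabilizer_of_card_ne_two [Fintype F] (hF : Fintype.card F ≠ 2)
    {x0 xoo : P1 F} (h0oo : x0 ≠ xoo) :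
    ∃ t ∈ stabilizer (GL (Fin 2) F) x0 ⊓ stabilizer (GL (Fin 2) F) xoo,
      ∀ x, t • x = x → x = x0 ∨ x = xoo := by
  classical
  obtain ⟨b, -, hb⟩ : ∃ b ∈ Finset.univ, b ∉ ({0, 1} : Finset F) := by
    refine Finset.exists_mem_notMem_of_card_lt_card ((Finset.card_le_two).trans_lt ?_)
    have := Fintype.one_lt_card (α := F)
    rw [Finset.card_univ]
    omega
  simp only [Finset.mem_insert, Finset.mem_singleton, not_or] at hb
  have hli := linearIndependent_pair_iff_ne.mpr h0oo
  obtain ⟨t, h0, hoo⟩ := exists_GL_mulVec_eq_smul hli 1 (Units.mk0 b hb.1)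
  rw [Units.val_one] at h0
  have hfix := fun x (hx : t • x = x) => P1.eq_or_eq_of_smul_eq_self x0.rep_nonzero
    xoo.rep_nonzero hli (Ne.symm hb.2) h0 hoo hx
  simp only [mk_rep] at hfix
  refine ⟨t, Subgroup.mem_inf.mpr ⟨?_, ?_⟩, hfix⟩
  · rw [mem_stabilizer_iff, ← x0.mk_rep, P1.smul_mk_eq_self_iff]
    exact ⟨1, h0⟩
  · rw [mem_stabilizer_iff, ← xoo.mk_rep, P1.smul_mk_eq_self_iff]
    exact ⟨b, hoo⟩

end Tori

/-- `N'` is the normalizer of `T'` in `G`, and if `F ≠ 𝔽₂` then `N` is the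
normalizer of `T` in `G`. -/
theorem statement13 {F : Type*} [Field F] [Fintype F] {F' : Type*} [Field F'] [Algebra F F']
    (hdim : Module.finrank F F' = 2)
    (σ : F' ≃ₐ[F] F') (hσ : σ ≠ (AlgEquiv.refl : F' ≃ₐ[F] F'))
    (x0 xoo : P1 F) (h0oo : x0 ≠ xoo) (P : P1 F') (hP : P ∉ ratPts F F') :
    N'sub F F' σ P = Subgroup.normalizer (T'sub F F' P : Set (GL (Fin 2) F)) ∧
      (Fintype.card F ≠ 2 → Nsub F x0 xoo = Subgroup.normalizer (Tsub F x0 xoo : Set (GL (Fin 2) F))) := by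
  constructor
  · obtain ⟨t, ht, hfix⟩ := exists_mem_comap_inf_stabilizer_of_notMem_ratPts hdim hσ hP
    rw [T'sub_eq_comap_inf_stabilizer σ, MulAction.normalizer_comap_inf_stabilizer _ ht hfix]
    rfl
  · intro hF
    obtain ⟨t, ht, hfix⟩ := exists_mem_inf_stabilizer_of_card_ne_two hF h0oo
    exact (MulAction.normalizer_comap_inf_stabilizer (MonoidHom.id _) ht hfix).symm
end
end

section
/- The quotient group N'/F^* is a dihedral group of order 2(q+1). -/
open Matrix CategoryTheory CategoryTheory.Limits Pointwise
open scoped LinearAlgebra.Projectivization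

noncomputable section

/-- The subgroup `F^*` of scalar matrices in `GL₂(F)`. -/
def scalarSub (F : Type*) [Field F] : Subgroup (GL (Fin 2) F) := (scalarGL F).range

lemma scalarGL_comm (F : Type*) [Field F] (c : Fˣ) (g : GL (Fin 2) F) :
    g * scalarGL F c = scalarGL F c * g := by
  refine Units.ext ?_
  simp only [Units.val_mul]
  exact (Matrix.scalar_commute (c : F) (fun r => Commute.all _ r)
    (g : Matrix (Fin 2) (Fin 2) F)).symm

lemma scalarSub_normal (F : Type*) [Field F] : (scalarSub F).Normal := by
  constructor
  intro n hn g
  obtain ⟨c, rfl⟩ := hn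
  refine ⟨c, ?_⟩
  rw [scalarGL_comm F c g, mul_assoc, mul_inv_cancel, mul_one]

instance scalarSub_subgroupOf_normal {F : Type*} [Field F] {F' : Type*} [Field F']
    [Algebra F F'] (σ : F' ≃ₐ[F] F') (P : P1 F') :
    ((scalarSub F).subgroupOf (N'sub F F' σ P)).Normal :=
  (scalarSub_normal F).subgroupOf _

/-!
Write `P = [α : 1]` with `α ∉ F`, so that `B = (α, 1)` is an `F`-basis of `F'`. Since `g • P = P`
means that `(α, 1)` is an eigenvector of `g`, the stabilizer of `P` in `GL₂(F)` is the image
of `F'ˣ` acting on `F' ≅ F²` by multiplication, and the matrix `s` of `σ` in this basis swaps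
`P` and `σP`. Hence `N' = F'ˣ ∪ s F'ˣ`, with `s² = 1` and `s x s = σ x`. Modulo the scalars
`Fˣ`, the image of `F'ˣ` is cyclic of order `(q² - 1)/(q - 1) = q + 1`, and `s` inverts it
because `x σ(x) ∈ Fˣ`; a group made of a cyclic subgroup and one coset of an involution
inverting it is dihedral.
-/

open Module

section CoordMatrix

variable {ι F A : Type*} [Fintype ι] [DecidableEq ι] [Field F] [CommRing A] [Algebra F A]
  (B : Basis ι F A)

/-- Transposed so that, acting on column vectors, it sends `(B i)ᵢ` to `(f (B i))ᵢ`. -/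
def coordMatrix (f : A →ₗ[F] A) : Matrix ι ι F := (LinearMap.toMatrix B B f)ᵀ

lemma coordMatrix_comp (f g : A →ₗ[F] A) :
    coordMatrix B (f ∘ₗ g) = coordMatrix B g * coordMatrix B f := by
  simp [coordMatrix, LinearMap.toMatrix_comp B B B f g, Matrix.transpose_mul]

lemma coordMatrix_id : coordMatrix B LinearMap.id = 1 := by
  simp [coordMatrix]

lemma coordMatrix_injective : Function.Injective (coordMatrix B) :=
  Matrix.transpose_injective.comp (LinearMap.toMatrix B B).injective

lemma coordMatrix_surjective : Function.Surjective (coordMatrix B) := fun M =>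
  ⟨Matrix.toLin B B Mᵀ, by simp [coordMatrix]⟩

lemma map_coordMatrix_mulVec (f : A →ₗ[F] A) :
    (coordMatrix B f).map (algebraMap F A) *ᵥ ⇑B = f ∘ ⇑B := by
  funext i
  conv_rhs => rw [Function.comp_apply, ← B.sum_repr (f (B i))]
  simp [Matrix.mulVec, dotProduct, coordMatrix, LinearMap.toMatrix_apply, Algebra.smul_def]

def unitsToGL : Aˣ →* GL ι F :=
  Units.map
    { toFun := fun x => coordMatrix B (LinearMap.mulLeft F x)
      map_one' := by rw [LinearMap.mulLeft_one, coordMatrix_id]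
      map_mul' := fun x y => by rw [mul_comm, LinearMap.mulLeft_mul, coordMatrix_comp] }

lemma unitsToGL_val (x : Aˣ) :
    (unitsToGL B x : Matrix ι ι F) = coordMatrix B (LinearMap.mulLeft F (x : A)) := rfl

lemma map_unitsToGL_mulVec (x : Aˣ) :
    (unitsToGL B x : Matrix ι ι F).map (algebraMap F A) *ᵥ ⇑B = (x : A) • ⇑B := by
  rw [unitsToGL_val, map_coordMatrix_mulVec]
  rfl

lemma unitsToGL_injective : Function.Injective (unitsToGL B) := fun x y h => by
  have := LinearMap.congr_fun (coordMatrix_injective B (congrArg Units.val h)) 1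
  exact Units.ext (by simpa using this)

lemma unitsToGL_algebraMap (c : Fˣ) :
    (unitsToGL B (Units.map (algebraMap F A) c) : Matrix ι ι F) = Matrix.scalar ι (c : F) := by
  have : LinearMap.mulLeft F (algebraMap F A c) = (c : F) • LinearMap.id :=
    LinearMap.ext fun z => by simp [Algebra.smul_def]
  simp [unitsToGL_val, this, coordMatrix, Matrix.smul_one_eq_diagonal]

lemma eq_unitsToGL_of_map_mulVec (g : GL ι F) (a : Aˣ)
    (h : (g : Matrix ι ι F).map (algebraMap F A) *ᵥ ⇑B = (a : A) • ⇑B) :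
    g = unitsToGL B a := by
  obtain ⟨f, hf⟩ := coordMatrix_surjective B (g : Matrix ι ι F)
  rw [← hf, map_coordMatrix_mulVec] at h
  have hfa : f = LinearMap.mulLeft F (a : A) := B.ext fun i => congrFun h i
  exact Units.ext (by rw [unitsToGL_val, ← hfa, hf])

def coordGL (e : A ≃ₗ[F] A) : GL ι F where
  val := coordMatrix B e
  inv := coordMatrix B e.symm
  val_inv := by rw [← coordMatrix_comp, e.symm_comp, coordMatrix_id]
  inv_val := by rw [← coordMatrix_comp, e.comp_symm, coordMatrix_id]

lemma coordGL_val (e : A ≃ₗ[F] A) : (coordGL B e : Matrix ι ι F) = coordMatrix B e := rfl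

end CoordMatrix

namespace DihedralGroup

variable {n : ℕ} {Q : Type*} [Group Q]

def lift (f : Multiplicative (ZMod n) →* Q) (s : Q) (hs : s * s = 1)
    (hf : ∀ i, s * f i * s = (f i)⁻¹) : DihedralGroup n →* Q where
  toFun
    | r i => f (.ofAdd i)
    | sr i => s * f (.ofAdd i)
  map_one' := map_one f
  map_mul' := by
    have hswap : ∀ i, f i * s = s * (f i)⁻¹ := fun i => by
      rw [← hf, ← mul_assoc, ← mul_assoc, hs, one_mul]
    rintro (i | i) (j | j) <;>
      simp only [r_mul_r, r_mul_sr, sr_mul_r, sr_mul_sr, ofAdd_add, ofAdd_sub, map_mul, map_div]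
    · rw [← mul_assoc, hswap, mul_assoc, div_eq_mul_inv, ← map_inv, ← map_mul, ← map_mul,
        mul_comm]
    · rw [mul_assoc]
    · rw [mul_assoc, ← mul_assoc (f _), hswap, ← mul_assoc, ← mul_assoc, hs, one_mul,
        div_eq_mul_inv, ← map_inv, ← map_mul, ← map_mul, mul_comm]

lemma lift_r (f : Multiplicative (ZMod n) →* Q) (s : Q) (hs : s * s = 1)
    (hf : ∀ i, s * f i * s = (f i)⁻¹) (i : ZMod n) : lift f s hs hf (r i) = f (.ofAdd i) := rfl

lemma lift_sr (f : Multiplicative (ZMod n) →* Q) (s : Q) (hs : s * s = 1)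
    (hf : ∀ i, s * f i * s = (f i)⁻¹) (i : ZMod n) :
    lift f s hs hf (sr i) = s * f (.ofAdd i) := rfl

end DihedralGroup

lemma nonempty_mulEquiv_dihedralGroup {Q : Type*} [Group Q] (C : Subgroup Q) [hC : IsCyclic C]
    (s : Q) (hsC : s ∉ C) (hs : s * s = 1) (hinv : ∀ c ∈ C, s * c * s = c⁻¹)
    (hcover : ∀ x, x ∈ C ∨ s * x ∈ C) :
    Nonempty (Q ≃* DihedralGroup (Nat.card C)) := by
  set e := zmodCyclicMulEquiv hC
  let φ := DihedralGroup.lift (C.subtype.comp e.toMonoidHom) s hs fun i => hinv _ (e i).2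
  have hinj : Function.Injective φ := by
    refine (injective_iff_map_eq_one φ).2 ?_
    rintro (i | i) h
    · have : e (.ofAdd i) = 1 := Subtype.ext h
      rw [e.map_eq_one_iff, ofAdd_eq_one] at this
      rw [this, DihedralGroup.r_zero]
    · exact absurd (eq_inv_of_mul_eq_one_left h ▸ inv_mem (e _).2) hsC
  have hsurj : Function.Surjective φ := by
    intro x
    rcases hcover x with hx | hx
    · exact ⟨.r (e.symm ⟨x, hx⟩).toAdd, by simp [φ, DihedralGroup.lift_r]⟩
    · refine ⟨.sr (e.symm ⟨s * x, hx⟩).toAdd, ?_⟩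
      simp [φ, DihedralGroup.lift_sr, ← mul_assoc, hs]
  exact ⟨(MulEquiv.ofBijective φ ⟨hinj, hsurj⟩).symm⟩

section QuadraticGalois

variable {F E : Type*} [Field F] [Field E] [Algebra F E] [FiniteDimensional F E] [IsGalois F E]

lemma AlgEquiv.involutive_of_finrank_eq_two (hdim : finrank F E = 2) (σ : E ≃ₐ[F] E) :
    Function.Involutive σ := fun x => by
  have h : σ ^ 2 = 1 := by
    rw [← hdim, ← IsGalois.card_aut_eq_finrank]
    exact pow_card_eq_one'
  simpa [pow_two] using AlgEquiv.congr_fun h x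

lemma mem_range_algebraMap_of_apply_eq_self (hdim : finrank F E = 2) {σ : E ≃ₐ[F] E}
    (hσ : σ ≠ 1) {x : E} (hx : σ x = x) : x ∈ Set.range (algebraMap F E) := by
  rw [IsGalois.mem_range_algebraMap_iff_fixed]
  intro τ
  obtain ⟨y, -, hy⟩ := (Nat.card_eq_two_iff' (1 : E ≃ₐ[F] E)).1
    (hdim ▸ IsGalois.card_aut_eq_finrank F E)
  by_cases hτ : τ = 1
  · rw [hτ, AlgEquiv.one_apply]
  · rwa [hy τ hτ, ← hy σ hσ]

end QuadraticGalois

section ProjectiveLine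

open Projectivization

variable {F F' : Type*} [Field F] [Field F'] [Algebra F F']

lemma glMap_coe (g : GL (Fin 2) F) :
    ((glMap F F' g : GL (Fin 2) F') : Matrix (Fin 2) (Fin 2) F') =
      (g : Matrix (Fin 2) (Fin 2) F).map (algebraMap F F') := rfl

lemma algEquiv_apply_ne_zero (σ : F' ≃ₐ[F] F') {v : Fin 2 → F'} (hv : v ≠ 0) :
    (fun i => σ (v i)) ≠ 0 :=
  fun h => hv (funext fun i => by simpa using congrFun h i)

lemma sigmaPt_mk_s14 (σ : F' ≃ₐ[F] F') (v : Fin 2 → F') (hv : v ≠ 0) :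
    sigmaPt σ (mk F' v hv) = mk F' (fun i => σ (v i)) (algEquiv_apply_ne_zero σ hv) := by
  obtain ⟨a, ha⟩ := exists_smul_eq_mk_rep F' v hv
  rw [sigmaPt, mk_eq_mk_iff']
  exact ⟨σ a, funext fun i => by simp [← ha, Units.smul_def]⟩

lemma sigmaPt_sigmaPt {σ : F' ≃ₐ[F] F'} (hσ : Function.Involutive σ) (p : P1 F') :
    sigmaPt σ (sigmaPt σ p) = p := by
  induction p using Projectivization.ind with
  | h v hv =>
    rw [sigmaPt_mk_s14, sigmaPt_mk_s14]
    simp only [hσ _]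

lemma glMap_smul_sigmaPt (σ : F' ≃ₐ[F] F') (g : GL (Fin 2) F) (p : P1 F') :
    glMap F F' g • sigmaPt σ p = sigmaPt σ (glMap F F' g • p) := by
  induction p using Projectivization.ind with
  | h v hv =>
    rw [sigmaPt_mk_s14, P1.smul_mk, P1.smul_mk, sigmaPt_mk_s14]
    congr 1
    funext i
    simp [glMap_coe, Matrix.mulVec, dotProduct]

lemma mem_N'sub_iff {σ : F' ≃ₐ[F] F'} (hσ : Function.Involutive σ) (P : P1 F')
    (g : GL (Fin 2) F) :
    g ∈ N'sub F F' σ P ↔ glMap F F' g • P = P ∨ glMap F F' g • P = sigmaPt σ P := by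
  rw [N'sub, Subgroup.mem_comap, MulAction.mem_stabilizer_iff, Set.smul_set_insert,
    Set.smul_set_singleton, glMap_smul_sigmaPt, Set.pair_eq_pair_iff]
  constructor
  · rintro (⟨h, -⟩ | ⟨h, -⟩)
    exacts [.inl h, .inr h]
  · rintro (h | h)
    · exact .inl ⟨h, by rw [h]⟩
    · exact .inr ⟨h, by rw [h, sigmaPt_sigmaPt hσ]⟩

lemma mk_mem_ratPts (v : Fin 2 → F') (hv : v ≠ 0)
    (hvF : ∀ i, v i ∈ Set.range (algebraMap F F')) :
    mk F' v hv ∈ ratPts F F' := by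
  choose u hu using hvF
  have hu0 : u ≠ 0 := fun h => hv (funext fun i => by simp [← hu, h])
  obtain ⟨a, ha⟩ := exists_smul_eq_mk_rep F u hu0
  refine ⟨mk F u hu0, ?_⟩
  rw [mk_eq_mk_iff']
  exact ⟨algebraMap F F' a, funext fun i => by simp [← ha, ← hu, Units.smul_def]⟩

def basisPt (B : Basis (Fin 2) F F') : P1 F' := mk F' ⇑B fun h => B.ne_zero 0 (congrFun h 0)

lemma exists_basis_of_notMem_ratPts (hdim : finrank F F' = 2) {P : P1 F'}
    (hP : P ∉ ratPts F F') : ∃ B : Basis (Fin 2) F F', B 1 = 1 ∧ P = basisPt B := by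
  induction P using Projectivization.ind with
  | h v hv =>
  have hv1 : v 1 ≠ 0 := by
    intro h1
    have hv0 : v 0 ≠ 0 := fun h0 => hv (funext fun i => by fin_cases i <;> assumption)
    refine hP (mk_eq_mk_iff' F' _ ![1, 0] hv (by simp) |>.2 ⟨v 0, ?_⟩ ▸ mk_mem_ratPts _ _ ?_)
    · funext i; fin_cases i <;> simp [h1]
    · intro i; fin_cases i <;> simp
  set α := v 0 / v 1
  have hvα : mk F' v hv = mk F' ![α, 1] (by simp) :=
    (mk_eq_mk_iff' F' _ _ hv _).2
      ⟨v 1, funext fun i => by fin_cases i <;> simp [α, mul_div_cancel₀ _ hv1]⟩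
  have hα : α ∉ Set.range (algebraMap F F') := fun hαF =>
    hP (hvα ▸ mk_mem_ratPts _ _ fun i => by fin_cases i <;> simp [hαF])
  have hli : LinearIndependent F ![α, 1] := by
    refine linearIndependent_fin2.2 ⟨by simp, fun a ha => hα ⟨a, ?_⟩⟩
    simpa [Algebra.smul_def] using ha
  refine ⟨basisOfLinearIndependentOfCardEqFinrank hli (by simp [hdim]), by simp, ?_⟩
  rw [basisPt, hvα]
  simp

end ProjectiveLine

section BasisPoint

open Projectivization

variable {F F' : Type*} [Field F] [Field F'] [Algebra F F'] (B : Basis (Fin 2) F F')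
  (σ : F' ≃ₐ[F] F')

lemma unitsToGL_smul_basisPt (x : F'ˣ) : glMap F F' (unitsToGL B x) • basisPt B = basisPt B := by
  rw [basisPt, P1.smul_mk, mk_eq_mk_iff']
  exact ⟨x, by rw [glMap_coe, map_unitsToGL_mulVec]⟩

lemma coordGL_smul_basisPt :
    glMap F F' (coordGL B σ.toLinearEquiv) • basisPt B = sigmaPt σ (basisPt B) := by
  rw [basisPt, P1.smul_mk, sigmaPt_mk_s14]
  simp only [glMap_coe, coordGL_val, map_coordMatrix_mulVec]
  rfl

lemma exists_eq_unitsToGL_of_smul_basisPt (g : GL (Fin 2) F)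
    (h : glMap F F' g • basisPt B = basisPt B) : ∃ x, g = unitsToGL B x := by
  rw [basisPt, P1.smul_mk, mk_eq_mk_iff] at h
  obtain ⟨a, ha⟩ := h
  exact ⟨a, eq_unitsToGL_of_map_mulVec B g a ha.symm⟩

lemma unitsToGL_mem_N'sub (x : F'ˣ) : unitsToGL B x ∈ N'sub F F' σ (basisPt B) := by
  rw [N'sub, Subgroup.mem_comap, MulAction.mem_stabilizer_iff, Set.smul_set_insert,
    Set.smul_set_singleton, glMap_smul_sigmaPt, unitsToGL_smul_basisPt]

lemma sigmaPt_basisPt_ne (hB1 : B 1 = 1)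
    (hfix : ∀ x, σ x = x → x ∈ Set.range (algebraMap F F')) :
    sigmaPt σ (basisPt B) ≠ basisPt B := by
  rw [basisPt, sigmaPt_mk_s14, Ne, mk_eq_mk_iff']
  rintro ⟨a, ha⟩
  have ha1 : a = 1 := by simpa [hB1] using congrFun ha 1
  obtain ⟨c, hc⟩ := hfix (B 0) (by simpa [ha1] using (congrFun ha 0).symm)
  exact (linearIndependent_fin2.1 B.linearIndependent).2 c (by simp [hB1, Algebra.smul_def, hc])

variable {σ} (hσ : Function.Involutive σ)
include hσ

lemma coordGL_mem_N'sub : coordGL B σ.toLinearEquiv ∈ N'sub F F' σ (basisPt B) :=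
  (mem_N'sub_iff hσ _ _).2 (.inr (coordGL_smul_basisPt B σ))

lemma coordGL_mul_self : coordGL B σ.toLinearEquiv * coordGL B σ.toLinearEquiv = 1 := by
  refine Units.ext ?_
  rw [Units.val_mul, coordGL_val, ← coordMatrix_comp, Units.val_one, ← coordMatrix_id B]
  exact congrArg _ (LinearMap.ext hσ)

lemma coordGL_mul_unitsToGL_mul_coordGL (x : F'ˣ) :
    coordGL B σ.toLinearEquiv * unitsToGL B x * coordGL B σ.toLinearEquiv =
      unitsToGL B (Units.map (σ : F' →* F') x) := by
  refine Units.ext ?_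
  simp only [Units.val_mul, coordGL_val, unitsToGL_val, ← coordMatrix_comp]
  congr 1
  ext z
  simp [hσ _]

lemma exists_eq_unitsToGL_of_mem_N'sub {g : GL (Fin 2) F}
    (hg : g ∈ N'sub F F' σ (basisPt B)) :
    ∃ x, g = unitsToGL B x ∨ g = coordGL B σ.toLinearEquiv * unitsToGL B x := by
  rcases (mem_N'sub_iff hσ _ _).1 hg with h | h
  · obtain ⟨x, hx⟩ := exists_eq_unitsToGL_of_smul_basisPt B g h
    exact ⟨x, .inl hx⟩
  · have hfix : glMap F F' (coordGL B σ.toLinearEquiv * g) • basisPt B = basisPt B := by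
      rw [map_mul, mul_smul, h, glMap_smul_sigmaPt, coordGL_smul_basisPt, sigmaPt_sigmaPt hσ]
    obtain ⟨x, hx⟩ := exists_eq_unitsToGL_of_smul_basisPt B _ hfix
    refine ⟨x, .inr ?_⟩
    rw [← hx, ← mul_assoc, coordGL_mul_self B hσ, one_mul]

end BasisPoint

section Quotient

variable {F F' : Type*} [Field F] [Field F'] [Algebra F F'] (B : Basis (Fin 2) F F')
  (σ : F' ≃ₐ[F] F')

lemma mem_range_unitsMap_iff (x : F'ˣ) :
    x ∈ (Units.map (algebraMap F F').toMonoidHom).range ↔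
      (x : F') ∈ Set.range (algebraMap F F') := by
  constructor
  · rintro ⟨c, rfl⟩
    exact ⟨c, rfl⟩
  · rintro ⟨d, hd⟩
    have hd0 : d ≠ 0 := by rintro rfl; exact x.ne_zero (by simp [← hd])
    exact ⟨Units.mk0 d hd0, Units.ext hd⟩

lemma scalarGL_eq_unitsToGL (c : Fˣ) :
    scalarGL F c = unitsToGL B (Units.map (algebraMap F F').toMonoidHom c) :=
  Units.ext (unitsToGL_algebraMap B c).symm

lemma unitsToGL_mem_scalarSub_iff (x : F'ˣ) :
    unitsToGL B x ∈ scalarSub F ↔ x ∈ (Units.map (algebraMap F F').toMonoidHom).range := by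
  constructor
  · rintro ⟨c, hc⟩
    exact ⟨c, unitsToGL_injective B ((scalarGL_eq_unitsToGL B c).symm.trans hc)⟩
  · rintro ⟨c, rfl⟩
    exact ⟨c, scalarGL_eq_unitsToGL B c⟩

def unitsToQuotient :
    F'ˣ →* N'sub F F' σ (basisPt B) ⧸ (scalarSub F).subgroupOf (N'sub F F' σ (basisPt B)) :=
  (QuotientGroup.mk' _).comp ((unitsToGL B).codRestrict _ (unitsToGL_mem_N'sub B σ))

lemma ker_unitsToQuotient :
    (unitsToQuotient B σ).ker = (Units.map (algebraMap F F').toMonoidHom).range := by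
  ext x
  rw [MonoidHom.mem_ker, unitsToQuotient, MonoidHom.comp_apply, QuotientGroup.mk'_apply,
    QuotientGroup.eq_one_iff, Subgroup.mem_subgroupOf, MonoidHom.codRestrict_apply,
    unitsToGL_mem_scalarSub_iff]

lemma card_range_unitsToQuotient [Finite F] :
    Nat.card (unitsToQuotient B σ).range = Nat.card F + 1 := by
  have hq : 1 < Nat.card F := Finite.one_lt_card
  have := Module.Finite.of_basis B
  have hcard := (unitsToQuotient B σ).ker.card_mul_index
  rw [Subgroup.index_ker, ker_unitsToQuotient,
    ← Nat.card_congr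
      (MonoidHom.ofInjective (Units.map_injective (algebraMap F F').injective)).toEquiv,
    Nat.card_units, Nat.card_units, Module.natCard_eq_pow_finrank (K := F) (V := F'),
    finrank_eq_card_basis B, Fintype.card_fin,
    ← one_pow 2, Nat.sq_sub_sq, mul_comm] at hcard
  exact Nat.eq_of_mul_eq_mul_right (by omega) hcard

variable {σ}

lemma unitsToQuotient_unitsMap (hσ : Function.Involutive σ)
    (hfix : ∀ x, σ x = x → x ∈ Set.range (algebraMap F F')) (x : F'ˣ) :
    unitsToQuotient B σ (Units.map (σ : F' →* F') x) = (unitsToQuotient B σ x)⁻¹ := by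
  rw [eq_inv_iff_mul_eq_one, ← map_mul, ← MonoidHom.mem_ker, ker_unitsToQuotient,
    mem_range_unitsMap_iff]
  apply hfix
  simp [hσ _, mul_comm]

lemma mk_coordGL_notMem_range_unitsToQuotient (hσ : Function.Involutive σ)
    (hne : sigmaPt σ (basisPt B) ≠ basisPt B) :
    QuotientGroup.mk' ((scalarSub F).subgroupOf (N'sub F F' σ (basisPt B)))
      ⟨coordGL B σ.toLinearEquiv, coordGL_mem_N'sub B hσ⟩ ∉ (unitsToQuotient B σ).range := by
  rintro ⟨x, hx⟩
  obtain ⟨c, hc⟩ := Subgroup.mem_subgroupOf.1 (QuotientGroup.eq.1 hx)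
  have hs : coordGL B σ.toLinearEquiv =
      unitsToGL B (x * Units.map (algebraMap F F').toMonoidHom c) := by
    rw [map_mul, ← scalarGL_eq_unitsToGL, hc]
    simp
  apply hne
  rw [← coordGL_smul_basisPt, hs, unitsToGL_smul_basisPt]

end Quotient

theorem nonempty_quotient_N'sub_mulEquiv_dihedralGroup {F F' : Type*} [Field F] [Field F']
    [Algebra F F'] [Finite F'] (B : Basis (Fin 2) F F') {σ : F' ≃ₐ[F] F'}
    (hσ : Function.Involutive σ)
    (hfix : ∀ x, σ x = x → x ∈ Set.range (algebraMap F F'))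
    (hne : sigmaPt σ (basisPt B) ≠ basisPt B) :
    Nonempty ((N'sub F F' σ (basisPt B) ⧸ (scalarSub F).subgroupOf (N'sub F F' σ (basisPt B)))
      ≃* DihedralGroup (Nat.card (unitsToQuotient B σ).range)) := by
  set ρ := unitsToQuotient B σ
  have : IsCyclic ρ.range := isCyclic_of_surjective _ ρ.rangeRestrict_surjective
  let π := QuotientGroup.mk' ((scalarSub F).subgroupOf (N'sub F F' σ (basisPt B)))
  let t (x : F'ˣ) : N'sub F F' σ (basisPt B) := ⟨unitsToGL B x, unitsToGL_mem_N'sub B σ x⟩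
  let s : N'sub F F' σ (basisPt B) := ⟨coordGL B σ.toLinearEquiv, coordGL_mem_N'sub B hσ⟩
  have hs : s * s = 1 := Subtype.ext (coordGL_mul_self B hσ)
  refine nonempty_mulEquiv_dihedralGroup ρ.range (π s)
    (mk_coordGL_notMem_range_unitsToQuotient B hσ hne) (by rw [← map_mul, hs, map_one]) ?_ ?_
  · rintro _ ⟨x, rfl⟩
    have hsts : s * t x * s = t (Units.map (σ : F' →* F') x) :=
      Subtype.ext (coordGL_mul_unitsToGL_mul_coordGL B hσ x)
    rw [← unitsToQuotient_unitsMap B hσ hfix]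
    change π s * π (t x) * π s = π (t _)
    rw [← map_mul, ← map_mul, hsts]
  · intro y
    induction y using QuotientGroup.induction_on with | H g => ?_
    obtain ⟨x, hx | hx⟩ := exists_eq_unitsToGL_of_mem_N'sub B hσ g.2
    · exact .inl ⟨x, congrArg π (Subtype.ext hx.symm)⟩
    · refine .inr ⟨x, ?_⟩
      change π (t x) = π s * π g
      rw [← map_mul]
      refine congrArg π (Subtype.ext ?_)
      simp [s, t, hx, ← mul_assoc, coordGL_mul_self B hσ]

/-- The quotient group `N'/F^*` is dihedral of order `2(q+1)`. -/
theorem statement14 {F : Type*} [Field F] [Fintype F] {F' : Type*} [Field F'] [Algebra F F']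
    (hdim : Module.finrank F F' = 2)
    (σ : F' ≃ₐ[F] F') (hσ : σ ≠ (AlgEquiv.refl : F' ≃ₐ[F] F'))
    (P : P1 F') (hP : P ∉ ratPts F F') :
    Nonempty
      ((↥(N'sub F F' σ P) ⧸ (scalarSub F).subgroupOf (N'sub F F' σ P))
        ≃* DihedralGroup (Fintype.card F + 1)) := by
  have : Module.Finite F F' := Module.finite_of_finrank_eq_succ hdim
  have : Finite F' := Module.finite_of_finite F
  have hfix : ∀ x, σ x = x → x ∈ Set.range (algebraMap F F') := fun _ =>
    mem_range_algebraMap_of_apply_eq_self hdim hσ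
  obtain ⟨B, hB1, rfl⟩ := exists_basis_of_notMem_ratPts hdim hP
  rw [← Nat.card_eq_fintype_card, ← card_range_unitsToQuotient B σ]
  exact nonempty_quotient_N'sub_mulEquiv_dihedralGroup B
    (AlgEquiv.involutive_of_finrank_eq_two hdim σ) hfix (sigmaPt_basisPt_ne B σ hB1 hfix)

end
end

section
/- Let p be the characteristic of F. Every element of order p in G = GL₂(F) has a unique fixed point in ℙ¹(F); consequently, every subgroup of G that is cyclic modulo p is either cyclic or conjugate in G to a subgroup of B. -/
open Matrix CategoryTheory CategoryTheory.Limits Pointwise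
open scoped LinearAlgebra.Projectivization

noncomputable section

/-- A finite group `H` is *cyclic modulo `l`* if it has a normal `l`-subgroup
whose quotient is cyclic. -/
def CyclicModulo (l : ℕ) (H : Type*) [Group H] : Prop :=
  ∃ Q : Subgroup H, ∃ hn : Q.Normal,
    IsPGroup l Q ∧ (letI := hn; IsCyclic (H ⧸ Q))

/-!
An element `g ≠ 1` of `GL₂(F)` with `g ^ p ^ k = 1` is unipotent: `(g - 1) ^ p ^ k = 0` in
characteristic `p`, so every eigenvalue of `g` is `1` and the fixed points of `g` on `ℙ¹` are the
lines in `ker (g - 1)`, a single line because `g ≠ 1`.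

If `H` has a normal `p`-subgroup `Q ≠ 1`, then `Q` fixes a point of `ℙ¹(F)` since
`|ℙ¹(F)| = q + 1` is prime to `p`, and no other point, since a nontrivial element of `Q` already
has only one fixed point. As `Q` is normal, `H` permutes the fixed points of `Q`, so `H` fixes
that point and is conjugate into `B`. If `Q = 1`, then `H ≅ H ⧸ Q` is cyclic.
-/

namespace Matrix

theorem pow_mulVec_of_mulVec_eq_smul {R n : Type*} [CommRing R] [Fintype n] [DecidableEq n]
    {A : Matrix n n R} {v : n → R} {a : R} (h : A *ᵥ v = a • v) (k : ℕ) :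
    (A ^ k) *ᵥ v = a ^ k • v := by
  induction k with
  | zero => simp
  | succ k ih => rw [pow_succ, ← mulVec_mulVec, h, mulVec_smul, ih, smul_smul, pow_succ']

theorem eq_zero_of_mulVec_eq_zero_of_span_eq_top {R m n ι : Type*} [CommRing R]
    [Fintype n] [DecidableEq n] {N : Matrix m n R} {b : ι → n → R}
    (hb : Submodule.span R (Set.range b) = ⊤) (h : ∀ i, N *ᵥ b i = 0) : N = 0 := by
  have : N.mulVecLin = 0 := LinearMap.ext_on_range hb h
  rw [← LinearMap.toMatrix'_toLin' N, Matrix.toLin'_apply', this, map_zero]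

end Matrix

theorem eq_one_of_pow_char_pow_eq_one {K : Type*} [Field K] {p : ℕ} [Fact p.Prime] [CharP K p]
    {a : K} {k : ℕ} (h : a ^ p ^ k = 1) : a = 1 := by
  have : (a - 1) ^ p ^ k = 0 := by rw [sub_pow_char_pow, h, one_pow, sub_self]
  exact sub_eq_zero.mp ((pow_eq_zero_iff (pow_ne_zero k (Fact.out : p.Prime).ne_zero)).mp this)

theorem MulAction.smul_eq_self_of_fixedPoints_normal_eq_singleton {G α : Type*} [Group G]
    [MulAction G α] {Q : Subgroup G} [Q.Normal] {x : α} (hx : fixedPoints Q α = {x}) (g : G) :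
    g • x = x := by
  have := smul_mem_fixedPoints_of_normal (H := Q) g (hx ▸ Set.mem_singleton x)
  rwa [hx] at this

namespace P1

variable {K : Type*} [Field K]

theorem smul_eq_self_iff (g : GL (Fin 2) K) (x : P1 K) :
    g • x = x ↔ ∃ a : K, (g : Matrix (Fin 2) (Fin 2) K) *ᵥ x.rep = a • x.rep := by
  conv_lhs => rw [← x.mk_rep, smul_mk, Projectivization.mk_eq_mk_iff']
  exact exists_congr fun a => eq_comm

theorem exists_smul_eq (x y : P1 K) : ∃ g : GL (Fin 2) K, g • x = y := by
  have : MulAction.IsPretransitive (LinearMap.GeneralLinearGroup K (Fin 2 → K)) (P1 K) :=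
    MulAction.isPretransitive_of_is_two_pretransitive
  obtain ⟨e, rfl⟩ := MulAction.exists_smul_eq (LinearMap.GeneralLinearGroup K (Fin 2 → K)) x y
  obtain ⟨g, rfl⟩ := Matrix.GeneralLinearGroup.toLin.surjective e
  refine ⟨g, ?_⟩
  induction x using Projectivization.ind with
  | h v hv =>
    rw [smul_mk, Projectivization.smul_mk, Projectivization.mk_eq_mk_iff']
    exact ⟨1, by rw [one_smul]; exact Matrix.GeneralLinearGroup.toLin_apply g v⟩

theorem not_dvd_natCard [Fintype K] (p : ℕ) [CharP K p] : ¬ p ∣ Nat.card (P1 K) := by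
  rw [Projectivization.card_of_finrank_two K _ (by simp), ← CharP.cast_eq_zero_iff K p,
    Nat.cast_add, Nat.card_eq_fintype_card, FiniteField.cast_card_eq_zero, zero_add, Nat.cast_one]
  exact one_ne_zero

variable {p : ℕ} [Fact p.Prime] [CharP K p]

theorem existsUnique_smul_eq_self_of_pow_char_pow_eq_one {g : GL (Fin 2) K} {k : ℕ}
    (hg1 : g ≠ 1) (hg : g ^ p ^ k = 1) : ∃! x : P1 K, g • x = x := by
  set A : Matrix (Fin 2) (Fin 2) K := ↑g
  have hpk : p ^ k ≠ 0 := pow_ne_zero k (Fact.out : p.Prime).ne_zero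
  have hA : A ^ p ^ k = 1 := by rw [← Units.val_pow_eq_pow_val, hg, Units.val_one]
  have smul_eq_self_iff_mem_ker (x : P1 K) : g • x = x ↔ (A - 1) *ᵥ x.rep = 0 := by
    rw [smul_eq_self_iff, Matrix.sub_mulVec, Matrix.one_mulVec, sub_eq_zero]
    refine ⟨fun ⟨a, ha⟩ => ?_, fun h => ⟨1, by rw [h, one_smul]⟩⟩
    have hpow := Matrix.pow_mulVec_of_mulVec_eq_smul ha (p ^ k)
    rw [hA, Matrix.one_mulVec] at hpow
    have ha1 : a ^ p ^ k = 1 :=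
      smul_left_injective K x.rep_nonzero (by simpa only [one_smul] using hpow.symm)
    rw [ha, eq_one_of_pow_char_pow_eq_one ha1, one_smul]
  obtain ⟨x, hx⟩ : ∃ x : P1 K, g • x = x := by
    obtain ⟨v, hv, hAv⟩ : ∃ v ≠ 0, (A - 1) *ᵥ v = 0 := by
      rw [Matrix.exists_mulVec_eq_zero_iff, ← pow_eq_zero_iff hpk, ← Matrix.det_pow,
        sub_pow_char_pow_of_commute _ _ (Commute.one_right A), hA, one_pow, sub_self,
        Matrix.det_zero]
    obtain ⟨a, ha⟩ := Projectivization.exists_smul_eq_mk_rep K v hv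
    refine ⟨Projectivization.mk K v hv, ?_⟩
    rw [smul_eq_self_iff_mem_ker, ← ha, Units.smul_def, Matrix.mulVec_smul, hAv, smul_zero]
  refine ⟨x, hx, fun y hy => ?_⟩
  by_contra hne
  have hspan := (Projectivization.linearIndependent_pair_iff_ne.mpr hne
    ).span_eq_top_of_card_eq_finrank (by simp)
  have hA1 : A - 1 = 0 := Matrix.eq_zero_of_mulVec_eq_zero_of_span_eq_top hspan fun i => by
    fin_cases i
    exacts [(smul_eq_self_iff_mem_ker y).mp hy, (smul_eq_self_iff_mem_ker x).mp hx]
  exact hg1 (Units.ext (sub_eq_zero.mp hA1))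

theorem exists_fixedPoints_eq_singleton_of_isPGroup [Fintype K] {H : Subgroup (GL (Fin 2) K)}
    {Q : Subgroup H} (hQ : IsPGroup p Q) (hQ1 : Q ≠ ⊥) :
    ∃ z : P1 K, MulAction.fixedPoints Q (P1 K) = {z} := by
  obtain ⟨z, hz⟩ := hQ.nonempty_fixed_point_of_prime_not_dvd_card (P1 K) (not_dvd_natCard p)
  obtain ⟨q, hqQ, hq1⟩ := Q.bot_or_exists_ne_one.resolve_left hQ1
  obtain ⟨k, hk⟩ := hQ ⟨q, hqQ⟩
  have hq := existsUnique_smul_eq_self_of_pow_char_pow_eq_one (g := (q : GL (Fin 2) K))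
    (by simpa using hq1) (by simpa using congrArg (fun r : Q => ((r : H) : GL (Fin 2) K)) hk)
  exact ⟨z, Set.eq_singleton_iff_unique_mem.mpr
    ⟨hz, fun y hy => hq.unique (hy ⟨q, hqQ⟩) (hz ⟨q, hqQ⟩)⟩⟩

end P1

/-- Every element of order `p = char F` in `G = GL₂(F)` has a unique fixed
point in `ℙ¹(F)`; consequently, every subgroup of `G` that is cyclic modulo `p` is either
cyclic or conjugate in `G` to a subgroup of `B`. -/
theorem statement17 {F : Type*} [Field F] [Fintype F] (xoo : P1 F) :
    (∀ g : GL (Fin 2) F, orderOf g = ringChar F → ∃! x : P1 F, g • x = x) ∧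
    (∀ H : Subgroup (GL (Fin 2) F), CyclicModulo (ringChar F) H →
      IsCyclic H ∨ ∃ g : GL (Fin 2) F, H.map (MulAut.conj g).toMonoidHom ≤ Bsub F xoo) := by
  have := ringChar.charP F
  have hp : Fact (ringChar F).Prime := ⟨CharP.char_is_prime F _⟩
  refine ⟨fun g hg => ?_, fun H ⟨Q, _, hQ, hcyc⟩ => ?_⟩
  · refine P1.existsUnique_smul_eq_self_of_pow_char_pow_eq_one (k := 1) ?_ ?_
    · rintro rfl
      exact hp.out.one_lt.ne (orderOf_one.symm.trans hg)
    · rw [pow_one, ← hg, pow_orderOf_eq_one]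
  rcases eq_or_ne Q ⊥ with rfl | hQ1
  · exact .inl (isCyclic_of_surjective _ (QuotientGroup.quotientBot (G := H)).surjective)
  obtain ⟨z, hz⟩ := P1.exists_fixedPoints_eq_singleton_of_isPGroup hQ hQ1
  obtain ⟨g, rfl⟩ := P1.exists_smul_eq z xoo
  refine .inr ⟨g, ?_⟩
  rw [Bsub, MulAction.stabilizer_smul_eq_stabilizer_map_conj]
  exact Subgroup.map_mono fun h hh =>
    MulAction.smul_eq_self_of_fixedPoints_normal_eq_singleton hz ⟨h, hh⟩

end
end

section
/- If t ∈ T' is not a scalar matrix and t fixes an unordered pair {Q₁, Q₂} of distinct points of ℙ¹(F) (setwise), then t² is a scalar matrix; in other words, the stabilizer in T'/F^* of any unordered pair of distinct points of ℙ¹(F) has order at most 2. -/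
open Matrix CategoryTheory CategoryTheory.Limits Pointwise
open scoped LinearAlgebra.Projectivization

noncomputable section

/-!
Since `t` fixes `P` and permutes `{Q₁, Q₂}`, the square `t²`, viewed in `GL₂(F')`, fixes the
three distinct points `Q₁, Q₂, P` of `ℙ¹(F')`. Their representatives are pairwise independent
eigenvectors of `t²` in the plane `F'²`, and decomposing the third along the first two shows
that all three eigenvalues agree, so `t²` is a homothety; its ratio is a diagonal entry of `t²`,
hence lies in `F`.
-/

theorem Matrix.linearIndependent_row_map {K L : Type*} [Field K] [Field L] {m : Type*} [Fintype m]
    [DecidableEq m] (φ : K →+* L) {A : Matrix m m K} (h : LinearIndependent K A.row) :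
    LinearIndependent L (A.map φ).row := by
  rw [Matrix.linearIndependent_rows_iff_isUnit] at h ⊢
  exact h.map φ.mapMatrix

theorem Matrix.exists_eq_scalar_of_map_eq_scalar {R S n : Type*} [Semiring R] [Semiring S]
    [Fintype n] [DecidableEq n] [Nonempty n] {φ : R →+* S} (hφ : Function.Injective φ)
    {A : Matrix n n R} {c : S} (h : A.map φ = Matrix.scalar n c) :
    ∃ d : R, φ d = c ∧ A = Matrix.scalar n d := by
  obtain ⟨i⟩ := ‹Nonempty n›
  have hc : φ (A i i) = c := by simpa using congrFun₂ h i i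
  refine ⟨A i i, hc, Matrix.map_injective hφ ?_⟩
  change A.map φ = (Matrix.scalar n (A i i)).map φ
  rw [h, ← hc]
  simp

namespace Module.End

variable {K V : Type*} [Field K] [AddCommGroup V] [Module K V]

theorem eq_smul_one_of_three_eigenvectors (hV : Module.finrank K V = 2) {f : Module.End K V}
    {x y z : V} {a b c : K} (hxy : LinearIndependent K ![x, y])
    (hxz : LinearIndependent K ![x, z]) (hyz : LinearIndependent K ![y, z])
    (hx : f x = a • x) (hy : f y = b • y) (hz : f z = c • z) : f = c • 1 := by
  have hspan : Submodule.span K {x, y} = ⊤ := by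
    rw [Set.pair_comm]
    simpa [Matrix.range_cons_cons_empty] using
      hxy.span_eq_top_of_card_eq_finrank (by simp [hV])
  obtain ⟨α, β, rfl⟩ := Submodule.mem_span_pair.mp (hspan ▸ Submodule.mem_top : z ∈ _)
  have hα : α ≠ 0 := by
    rintro rfl
    simpa using (LinearIndependent.pair_iff.mp hyz β (-1) (by simp)).2
  have hβ : β ≠ 0 := by
    rintro rfl
    simpa using (LinearIndependent.pair_iff.mp hxz α (-1) (by simp)).2
  have hcomb : (α * (a - c)) • x + (β * (b - c)) • y = 0 := by
    simp only [map_add, map_smul, hx, hy, smul_add, smul_smul] at hz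
    linear_combination (norm := module) hz
  obtain ⟨hac, hbc⟩ := LinearIndependent.pair_iff.mp hxy _ _ hcomb
  have ha : a = c := by simpa [hα, sub_eq_zero] using hac
  have hb : b = c := by simpa [hβ, sub_eq_zero] using hbc
  refine LinearMap.ext_on hspan ?_
  rintro w (rfl | rfl)
  · simp [hx, ha]
  · simp [hy, hb]

end Module.End

namespace P1

variable {K : Type*} [Field K]

theorem exists_mulVec_rep_eq_smul_of_smul_eq {g : GL (Fin 2) K} {x : P1 K} (h : g • x = x) :
    ∃ a : Kˣ, (g : Matrix (Fin 2) (Fin 2) K) *ᵥ x.rep = (a : K) • x.rep := by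
  obtain ⟨a, ha⟩ :=
    (Projectivization.mk_eq_mk_iff K _ _ _ x.rep_nonzero).mp (h.trans x.mk_rep.symm)
  exact ⟨a, ha.symm⟩

theorem exists_eq_scalarGL_of_three_fixed {g : GL (Fin 2) K} {x y z : P1 K}
    (hxy : x ≠ y) (hxz : x ≠ z) (hyz : y ≠ z)
    (hx : g • x = x) (hy : g • y = y) (hz : g • z = z) :
    ∃ c : Kˣ, g = scalarGL K c := by
  obtain ⟨a, ha⟩ := exists_mulVec_rep_eq_smul_of_smul_eq hx
  obtain ⟨b, hb⟩ := exists_mulVec_rep_eq_smul_of_smul_eq hy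
  obtain ⟨c, hc⟩ := exists_mulVec_rep_eq_smul_of_smul_eq hz
  have hlin : Matrix.toLin' (g : Matrix (Fin 2) (Fin 2) K) = (c : K) • 1 :=
    Module.End.eq_smul_one_of_three_eigenvectors (by simp)
      (Projectivization.linearIndependent_pair_iff_ne.mpr hxy)
      (Projectivization.linearIndependent_pair_iff_ne.mpr hxz)
      (Projectivization.linearIndependent_pair_iff_ne.mpr hyz) ha hb hc
  refine ⟨c, Units.ext (Matrix.toLin'.injective ?_)⟩
  rw [hlin]
  ext v i
  simp [scalarGL, Pi.single_apply]

end P1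

namespace P1

variable {F : Type*} [Field F] (F' : Type*) [Field F'] [Algebra F F']

def inclusion (x : P1 F) : P1 F' :=
  Projectivization.mk F' (fun i => algebraMap F F' (x.rep i))
    (fun h => x.rep_nonzero (funext fun i =>
      (algebraMap F F').injective (by simpa using congrFun h i)))

theorem range_inclusion : Set.range (inclusion (F := F) F') = ratPts F F' := rfl

variable {F'}

theorem inclusion_mk (v : Fin 2 → F) (hv : v ≠ 0) :
    inclusion F' (Projectivization.mk F v hv)
      = Projectivization.mk F' (fun i => algebraMap F F' (v i))
        (fun h => hv (funext fun i =>
          (algebraMap F F').injective (by simpa using congrFun h i))) := by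
  rw [inclusion, Projectivization.mk_eq_mk_iff]
  obtain ⟨a, ha⟩ := Projectivization.exists_smul_eq_mk_rep F v hv
  refine ⟨Units.map (algebraMap F F') a, funext fun i => ?_⟩
  simp [← ha, Units.smul_def]

theorem inclusion_smul (g : GL (Fin 2) F) (x : P1 F) :
    inclusion F' (g • x) = glMap F F' g • inclusion F' x := by
  induction x using Projectivization.ind with
  | h v hv =>
    rw [smul_mk, inclusion_mk, inclusion_mk, smul_mk]
    congr 1
    funext i
    exact RingHom.map_mulVec (algebraMap F F') (g : Matrix (Fin 2) (Fin 2) F) v i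

theorem inclusion_injective : Function.Injective (inclusion (F := F) F') := by
  intro x y h
  by_contra hxy
  have hli := Matrix.linearIndependent_row_map (algebraMap F F')
    (A := (Matrix.of ![x.rep, y.rep] : Matrix (Fin 2) (Fin 2) F))
    (Projectivization.linearIndependent_pair_iff_ne.mpr hxy)
  have hmap : (Matrix.of ![x.rep, y.rep]).map (algebraMap F F')
      = ![fun i => algebraMap F F' (x.rep i), fun i => algebraMap F F' (y.rep i)] := by
    ext i j
    fin_cases i <;> rfl
  rw [Matrix.row, hmap] at hli
  have hne : inclusion F' x ≠ inclusion F' y :=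
    (Projectivization.independent_pair_iff_ne _ _).mp
      ((Projectivization.independent_mk_iff_LinearIndependent _ _).mpr hli)
  exact hne h

end P1

theorem exists_eq_scalarGL_of_glMap_eq_scalarGL {F : Type*} [Field F] {F' : Type*} [Field F']
    [Algebra F F'] {g : GL (Fin 2) F} {c : F'ˣ} (h : glMap F F' g = scalarGL F' c) :
    ∃ d : Fˣ, g = scalarGL F d := by
  obtain ⟨d, hdc, hd⟩ :=
    Matrix.exists_eq_scalar_of_map_eq_scalar (algebraMap F F').injective (congrArg Units.val h)
  have hd0 : d ≠ 0 := by
    rintro rfl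
    exact c.ne_zero (by simp [← hdc])
  exact ⟨Units.mk0 d hd0, Units.ext hd⟩

theorem statement19_general {F : Type*} [Field F] {F' : Type*} [Field F'] [Algebra F F']
    (P : P1 F') (hP : P ∉ ratPts F F')
    (t : GL (Fin 2) F) (ht : t ∈ T'sub F F' P)
    (Q1 Q2 : P1 F) (hQ : Q1 ≠ Q2)
    (hfix : (t • Q1 = Q1 ∧ t • Q2 = Q2) ∨ (t • Q1 = Q2 ∧ t • Q2 = Q1)) :
    ∃ c : Fˣ, t ^ 2 = scalarGL F c := by
  have hQ1 : t ^ 2 • Q1 = Q1 := by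
    rcases hfix with ⟨h1, -⟩ | ⟨h1, h2⟩ <;> simp only [sq, mul_smul, *]
  have hQ2 : t ^ 2 • Q2 = Q2 := by
    rcases hfix with ⟨-, h2⟩ | ⟨h1, h2⟩ <;> simp only [sq, mul_smul, *]
  have htP : glMap F F' t • P = P := ht
  have hP2 : glMap F F' (t ^ 2) • P = P := by rw [map_pow, sq, mul_smul, htP, htP]
  rw [← P1.range_inclusion] at hP
  obtain ⟨c, hc⟩ := P1.exists_eq_scalarGL_of_three_fixed (P1.inclusion_injective.ne hQ)
    (fun h => hP ⟨Q1, h⟩) (fun h => hP ⟨Q2, h⟩)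
    (by rw [← P1.inclusion_smul, hQ1]) (by rw [← P1.inclusion_smul, hQ2]) hP2
  exact exists_eq_scalarGL_of_glMap_eq_scalarGL hc

/-- If `t ∈ T'` is not scalar and fixes an unordered pair of distinct
points of `ℙ¹(F)` setwise, then `t²` is a scalar matrix. -/
theorem statement19 {F : Type*} [Field F] [Fintype F] {F' : Type*} [Field F'] [Algebra F F']
    (hdim : Module.finrank F F' = 2)
    (P : P1 F') (hP : P ∉ ratPts F F')
    (t : GL (Fin 2) F) (ht : t ∈ T'sub F F' P) (hns : ¬ ∃ c : Fˣ, t = scalarGL F c)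
    (Q1 Q2 : P1 F) (hQ : Q1 ≠ Q2)
    (hfix : (t • Q1 = Q1 ∧ t • Q2 = Q2) ∨ (t • Q1 = Q2 ∧ t • Q2 = Q1)) :
    ∃ c : Fˣ, t ^ 2 = scalarGL F c :=
  statement19_general P hP t ht Q1 Q2 hQ hfix

end
end
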